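/- arXiv:1812.03750 — 4 statements merged into one kernel-verified Lean document; each statement's English description precedes it below -/
import Mathlib

section
/- Let G be a graph with perfect matching M and S ⊆ M. Then S is a forcing set of M if and only if the graph G - V(S), obtained by deleting all endpoints of edges of S, has a unique perfect matching. -/
/-- `M` is a perfect matching of `G`, viewed as a set of edges. -/
def IsPM {V : Type} (G : SimpleGraph V) (M : Set (Sym2 V)) : Prop :=
  M ⊆ G.edgeSet ∧ ∀ v : V, ∃! e, e ∈ M ∧ v ∈ e

/-- `M` is a perfect matching of the induced subgraph of `G` on the vertex set `A`. -/
def MatchingOn {V : Type} (G : SimpleGraph V) (A : Set V) (M : Set (Sym2 V)) : Prop :=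
  M ⊆ G.edgeSet ∧ (∀ e ∈ M, ∀ v ∈ e, v ∈ A) ∧ ∀ v ∈ A, ∃! e, e ∈ M ∧ v ∈ e

/-- The set of endpoints of the edges in `S`. -/
def endPoints {V : Type} (S : Set (Sym2 V)) : Set V :=
  {v | ∃ e ∈ S, v ∈ e}

/-- `S ⊆ M` is a forcing set of the perfect matching `M` of `G`:
`M` is the only perfect matching of `G` containing `S`. -/
def IsForcing {V : Type} (G : SimpleGraph V) (M S : Set (Sym2 V)) : Prop :=
  S ⊆ M ∧ ∀ N : Set (Sym2 V), IsPM G N → S ⊆ N → N = M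

/-- If `N` is a perfect matching containing `S`, then `N \ S` is a matching on the
complement of the endpoints of `S`. -/
lemma pm_diff {V : Type} (G : SimpleGraph V) (N S : Set (Sym2 V))
    (hN : IsPM G N) (hSN : S ⊆ N) : MatchingOn G (endPoints S)ᶜ (N \ S) := by
  obtain ⟨hNe, hNu⟩ := hN
  refine ⟨fun e he => hNe he.1, ?_, ?_⟩
  · rintro e ⟨heN, heS⟩ v hv hvS
    obtain ⟨f, hfS, hvf⟩ := hvS
    have := (hNu v).unique ⟨heN, hv⟩ ⟨hSN hfS, hvf⟩
    exact heS (this ▸ hfS)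
  · intro v hv
    obtain ⟨e, ⟨heN, hve⟩, hu⟩ := hNu v
    have heS : e ∉ S := fun h => hv ⟨e, h, hve⟩
    exact ⟨e, ⟨⟨heN, heS⟩, hve⟩, fun f hf => hu f ⟨hf.1.1, hf.2⟩⟩

/-- If `N` is a matching on the complement of the endpoints of `S` and `S ⊆ M` with
`M` a perfect matching, then `S ∪ N` is a perfect matching. -/
lemma union_pm {V : Type} (G : SimpleGraph V) (M S N : Set (Sym2 V))
    (hM : IsPM G M) (hSM : S ⊆ M) (hN : MatchingOn G (endPoints S)ᶜ N) :
    IsPM G (S ∪ N) := by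
  obtain ⟨hMe, hMu⟩ := hM
  obtain ⟨hNe, hNA, hNu⟩ := hN
  refine ⟨fun e he => he.elim (fun h => hMe (hSM h)) (fun h => hNe h), ?_⟩
  intro v
  by_cases hv : v ∈ endPoints S
  · obtain ⟨f, hfS, hvf⟩ := hv
    refine ⟨f, ⟨Or.inl hfS, hvf⟩, ?_⟩
    rintro e ⟨he, hve⟩
    rcases he with heS | heN
    · exact (hMu v).unique ⟨hSM heS, hve⟩ ⟨hSM hfS, hvf⟩
    · exact absurd ⟨f, hfS, hvf⟩ (hNA e heN v hve)
  · obtain ⟨e, ⟨heN, hve⟩, hu⟩ := hNu v hv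
    refine ⟨e, ⟨Or.inr heN, hve⟩, ?_⟩
    rintro f ⟨hf, hvf⟩
    rcases hf with hfS | hfN
    · exact absurd ⟨f, hfS, hvf⟩ hv
    · exact hu f ⟨hfN, hvf⟩

/-- `S ⊆ M` is a forcing set of `M` if and only if `G - V(S)` has a unique
perfect matching. -/
theorem stmt_11 {V : Type} [Fintype V] (G : SimpleGraph V) (M S : Set (Sym2 V))
    (hM : IsPM G M) (hSM : S ⊆ M) :
    IsForcing G M S ↔ ∃! N : Set (Sym2 V), MatchingOn G (endPoints S)ᶜ N := by
  constructor
  · rintro ⟨-, hF⟩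
    refine ⟨M \ S, pm_diff G M S hM hSM, ?_⟩
    intro N hN
    have hPM : IsPM G (S ∪ N) := union_pm G M S N hM hSM hN
    have hEq : S ∪ N = M := hF _ hPM Set.subset_union_left
    apply Set.Subset.antisymm
    · intro e he
      refine ⟨hEq ▸ Or.inr he, fun heS => ?_⟩
      obtain ⟨v, hv⟩ : ∃ v, v ∈ e := ⟨e.out.1, e.out_fst_mem⟩
      exact hN.2.1 e he v hv ⟨e, heS, hv⟩
    · rintro e ⟨heM, heS⟩
      have : e ∈ S ∪ N := hEq ▸ heM
      exact this.resolve_left heS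
  · rintro ⟨N₀, hN₀, hu⟩ 
    refine ⟨hSM, fun N hN hSN => ?_⟩
    have h1 : N \ S = N₀ := hu _ (pm_diff G N S hN hSN)
    have h2 : M \ S = N₀ := hu _ (pm_diff G M S hM hSM)
    have : N \ S = M \ S := h1.trans h2.symm
    calc N = S ∪ (N \ S) := (Set.union_diff_cancel hSN).symm
    _ = S ∪ (M \ S) := by rw [this]
    _ = M := Set.union_diff_cancel hSM
end

section
/- Let G be a graph with a unique perfect matching M and suppose G has no vertex of degree 1. Then G is not 2-edge-connected; in particular, G contains a bridge. -/
namespace Kotzig13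

open SimpleGraph

variable {V : Type}

/-- Two matchings on the same vertex set, one contained in the other, are equal. -/
lemma matching_eq_of_subset {G : SimpleGraph V} {A : Set V} {N M : Set (Sym2 V)}
    (hN : MatchingOn G A N) (hM : MatchingOn G A M) (h : N ⊆ M) : N = M := by
  apply Set.Subset.antisymm h
  intro e he
  obtain ⟨x, y, rfl⟩ : ∃ x y, e = s(x, y) := by
    induction e using Sym2.ind with
    | _ a b => exact ⟨a, b, rfl⟩
  have hxA : x ∈ A := hM.2.1 _ he x (Sym2.mem_mk_left x y)
  obtain ⟨f, ⟨hfN, hxf⟩, -⟩ := hN.2.2 x hxA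
  obtain ⟨g, -, hg⟩ := hM.2.2 x hxA
  have h1 : f = g := hg f ⟨h hfN, hxf⟩
  have h2 : s(x, y) = g := hg _ ⟨he, Sym2.mem_mk_left x y⟩
  rw [h2, ← h1]; exact hfN

/-- Flipping an alternating cycle produces a different matching: contradiction with
uniqueness.  The cycle is `c 0, c 1, ..., c (2k-1)` with `M`-edges at even positions. -/
lemma flip_false {G : SimpleGraph V} {A : Set V} {M : Set (Sym2 V)}
    (hmo : MatchingOn G A M)
    (huniq : ∀ N : Set (Sym2 V), MatchingOn G A N → N = M)
    (k : ℕ) (hk : 1 ≤ k) (c : ℕ → V)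
    (hA : ∀ t, t < 2*k → c t ∈ A)
    (hinj : ∀ s, s < 2*k → ∀ t, t < 2*k → c s = c t → s = t)
    (hMp : ∀ u, u < k → s(c (2*u), c (2*u+1)) ∈ M)
    (hEp : ∀ u, u < k → s(c (2*u+1), c ((2*u+2) % (2*k))) ∈ G.edgeSet ∧
      s(c (2*u+1), c ((2*u+2) % (2*k))) ∉ M) :
    False := by
  obtain ⟨hsub, hend, hex⟩ := hmo
  have h2k : 0 < 2*k := by omega
  have hMedge : ∀ v ∈ A, ∀ e, e ∈ M → v ∈ e → ∀ e', e' ∈ M → v ∈ e' → e = e' := by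
    intro v hv e he hve e' he' hve'
    obtain ⟨f, -, hf⟩ := hex v hv
    rw [hf e ⟨he, hve⟩, hf e' ⟨he', hve'⟩]
  set N : Set (Sym2 V) := {e | e ∈ M ∧ ∀ u, u < k → e ≠ s(c (2*u), c (2*u+1))} ∪
      {e | ∃ u, u < k ∧ e = s(c (2*u+1), c ((2*u+2) % (2*k)))} with hNdef
  have hmemN : ∀ e, e ∈ N ↔ ((e ∈ M ∧ ∀ u, u < k → e ≠ s(c (2*u), c (2*u+1))) ∨
      (∃ u, u < k ∧ e = s(c (2*u+1), c ((2*u+2) % (2*k))))) := by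
    intro e; rw [hNdef]; rfl
  have hNmo : MatchingOn G A N := by
    refine ⟨?_, ?_, ?_⟩
    · intro e he
      rcases (hmemN e).1 he with ⟨he, -⟩ | ⟨u, hu, rfl⟩
      · exact hsub he
      · exact (hEp u hu).1
    · intro e he v hv
      rcases (hmemN e).1 he with ⟨he, -⟩ | ⟨u, hu, rfl⟩
      · exact hend e he v hv
      · rcases Sym2.mem_iff.1 hv with rfl | rfl
        · exact hA _ (by omega)
        · exact hA _ (Nat.mod_lt _ h2k)
    · intro v hv
      by_cases hvc : ∃ t, t < 2*k ∧ c t = v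
      · obtain ⟨t, ht, rfl⟩ := hvc
        rcases Nat.even_or_odd t with ⟨u, hu⟩ | ⟨u, hu⟩
        · -- t = 2*u even
          have htu : t = 2*u := by omega
          have huk : u < k := by omega
          have hu' : ∃ u', u' < k ∧ (2*u'+2) % (2*k) = t := by
            rcases Nat.eq_zero_or_pos u with rfl | hupos
            · refine ⟨k-1, by omega, ?_⟩
              have h1 : 2*(k-1)+2 = 2*k := by omega
              rw [h1, Nat.mod_self]; omega
            · exact ⟨u-1, by omega, by rw [Nat.mod_eq_of_lt (by omega)]; omega⟩
          obtain ⟨u', hu'k, hu'e⟩ := hu'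
          refine ⟨s(c (2*u'+1), c ((2*u'+2) % (2*k))), ⟨(hmemN _).2 (Or.inr ⟨u', hu'k, rfl⟩),
            by rw [hu'e]; exact Sym2.mem_mk_right _ _⟩, ?_⟩
          rintro e' ⟨he'N, hve'⟩
          rcases (hmemN e').1 he'N with ⟨he', hne'⟩ | ⟨u₂, hu₂, rfl⟩
          · exfalso
            have : e' = s(c (2*u), c (2*u+1)) := by
              refine hMedge _ hv e' he' hve' _ (hMp u huk) ?_
              rw [htu]; exact Sym2.mem_mk_left _ _
            exact hne' u huk this
          · rcases Sym2.mem_iff.1 hve' with h | h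
            · exfalso
              have := hinj _ ht _ (by omega) h
              omega
            · have hmlt : (2*u₂+2) % (2*k) < 2*k := Nat.mod_lt _ h2k
              have hteq := hinj _ ht _ hmlt h
              have : u₂ = u' := by
                have h1 : 2*u₂+2 < 2*k ∨ 2*u₂+2 = 2*k := by omega
                have h2 : 2*u'+2 < 2*k ∨ 2*u'+2 = 2*k := by omega
                rcases h1 with h1 | h1 <;> rcases h2 with h2 | h2
                · rw [Nat.mod_eq_of_lt h1] at hteq
                  rw [Nat.mod_eq_of_lt h2] at hu'e
                  omega
                · rw [Nat.mod_eq_of_lt h1] at hteq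
                  rw [h2, Nat.mod_self] at hu'e
                  omega
                · rw [h1, Nat.mod_self] at hteq
                  rw [Nat.mod_eq_of_lt h2] at hu'e
                  omega
                · omega
              rw [this]
        · -- t = 2*u+1 odd
          have htu : t = 2*u+1 := by omega
          have huk : u < k := by omega
          refine ⟨s(c (2*u+1), c ((2*u+2) % (2*k))), ⟨(hmemN _).2 (Or.inr ⟨u, huk, rfl⟩),
            by rw [htu]; exact Sym2.mem_mk_left _ _⟩, ?_⟩
          rintro e' ⟨he'N, hve'⟩
          rcases (hmemN e').1 he'N with ⟨he', hne'⟩ | ⟨u₂, hu₂, rfl⟩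
          · exfalso
            have : e' = s(c (2*u), c (2*u+1)) := by
              refine hMedge _ hv e' he' hve' _ (hMp u huk) ?_
              rw [htu]; exact Sym2.mem_mk_right _ _
            exact hne' u huk this
          · rcases Sym2.mem_iff.1 hve' with h | h
            · have := hinj _ ht _ (by omega) h
              have : u₂ = u := by omega
              rw [this]
            · exfalso
              have hmlt : (2*u₂+2) % (2*k) < 2*k := Nat.mod_lt _ h2k
              have hteq := hinj _ ht _ hmlt h
              have h1 : 2*u₂+2 < 2*k ∨ 2*u₂+2 = 2*k := by omega
              rcases h1 with h1 | h1
              · rw [Nat.mod_eq_of_lt h1] at hteq; omega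
              · rw [h1, Nat.mod_self] at hteq; omega
      · push_neg at hvc
        obtain ⟨e, ⟨heM, hve⟩, hU⟩ := hex v hv
        have heN : e ∈ N := by
          refine (hmemN e).2 (Or.inl ⟨heM, ?_⟩)
          intro u hu he
          subst he
          rcases Sym2.mem_iff.1 hve with rfl | rfl
          · exact hvc _ (by omega) rfl
          · exact hvc _ (by omega) rfl
        refine ⟨e, ⟨heN, hve⟩, ?_⟩
        rintro e' ⟨he'N, hve'⟩
        rcases (hmemN e').1 he'N with ⟨he', -⟩ | ⟨u₂, hu₂, rfl⟩
        · exact hU e' ⟨he', hve'⟩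
        · exfalso
          rcases Sym2.mem_iff.1 hve' with h | h
          · exact hvc _ (by omega) h.symm
          · exact hvc _ (Nat.mod_lt _ h2k) h.symm
  have hNM := huniq N hNmo
  have hadd : s(c (2*0+1), c ((2*0+2) % (2*k))) ∈ N := (hmemN _).2 (Or.inr ⟨0, hk, rfl⟩)
  rw [hNM] at hadd
  exact (hEp 0 hk).2 hadd

/-- Instantiation of `flip_false` for a contiguous alternating segment
`a st, a (st+1), ..., a (st+len-1)` closed up by a non-matching edge back to `a st`. -/
lemma seg_false {G : SimpleGraph V} {A : Set V} {M : Set (Sym2 V)}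
    (hmo : MatchingOn G A M)
    (huniq : ∀ N : Set (Sym2 V), MatchingOn G A N → N = M)
    (a : ℕ → V) (hAa : ∀ n, a n ∈ A)
    (hMe : ∀ n, n % 2 = 0 → s(a n, a (n+1)) ∈ M)
    (hNe : ∀ n, n % 2 = 1 → s(a n, a (n+1)) ∈ G.edgeSet ∧ s(a n, a (n+1)) ∉ M)
    (st len : ℕ) (hst : st % 2 = 0) (hlen : len % 2 = 0) (h2 : 2 ≤ len)
    (hinj : ∀ s, s < len → ∀ t, t < len → a (st + s) = a (st + t) → s = t)
    (hwrap : s(a (st + len - 1), a st) ∈ G.edgeSet ∧ s(a (st + len - 1), a st) ∉ M) :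
    False := by
  have hlk : 2 * (len / 2) = len := by omega
  apply flip_false hmo huniq (len / 2) (by omega) (fun t => a (st + t % len))
  · intro t _; exact hAa _
  · intro s hs t ht h
    rw [hlk] at hs ht
    rw [Nat.mod_eq_of_lt hs, Nat.mod_eq_of_lt ht] at h
    exact hinj s hs t ht h
  · intro u hu
    have h1 : 2*u < len := by omega
    have h2' : 2*u+1 < len := by omega
    simp only [Nat.mod_eq_of_lt h1, Nat.mod_eq_of_lt h2']
    have : st + (2*u+1) = (st + 2*u) + 1 := by omega
    rw [this]
    exact hMe _ (by omega)
  · intro u hu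
    have h2' : 2*u+1 < len := by omega
    rw [hlk]
    simp only [Nat.mod_eq_of_lt h2']
    rcases Nat.lt_or_ge (2*u+2) len with h3 | h3
    · simp only [Nat.mod_eq_of_lt h3]
      have h5 : st + (2*u+2) = (st + (2*u+1)) + 1 := by omega
      rw [h5]
      exact hNe _ (by omega)
    · have h4 : 2*u+2 = len := by omega
      rw [h4]
      simp only [Nat.mod_self, Nat.zero_mod]
      have h5 : st + (2*u+1) = st + len - 1 := by omega
      rw [h5]
      simpa using hwrap


/-- If an endpoint has no incident edges, it cannot reach a different vertex. -/
lemma no_reach_of_isolated {G : SimpleGraph V} {u v : V} (hne : u ≠ v)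
    (h : ∀ w, ¬ G.Adj u w) : ¬ G.Reachable u v := by
  rintro ⟨w⟩
  cases w with
  | nil => exact hne rfl
  | cons h' p => exact h _ h'

/-- Transfer reachability along a vertex map that sends edges to edges or collapses them. -/
lemma reach_lift {G G' : SimpleGraph V} (f : V → V)
    (hstep : ∀ a b, G.Adj a b → f a = f b ∨ G'.Adj (f a) (f b)) :
    ∀ {u v : V}, G.Reachable u v → G'.Reachable (f u) (f v) := by
  intro u v h
  obtain ⟨w⟩ := h
  induction w with
  | nil => exact SimpleGraph.Reachable.refl _
  | cons h' p ih =>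
    rcases hstep _ _ h' with h2 | h2
    · rw [h2]; exact ih
    · exact (h2.reachable).trans ih

/-- Kotzig's theorem, inductive form: a graph whose edges all live inside a set `A`
carrying a unique perfect matching of `A` has a bridge in the matching. -/
lemma kot [Fintype V] : ∀ (k : ℕ) (G : SimpleGraph V) (A : Set V) (M : Set (Sym2 V)),
    A.ncard ≤ k → A.Nonempty → (∀ u w : V, G.Adj u w → u ∈ A) → MatchingOn G A M →
    (∀ N : Set (Sym2 V), MatchingOn G A N → N = M) → ∃ e ∈ M, G.IsBridge e := by
  intro k
  induction k with
  | zero =>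
    intro G A M hc hne _ _ _
    exfalso
    rw [Nat.le_zero, Set.ncard_eq_zero (Set.toFinite A)] at hc
    exact hne.ne_empty hc
  | succ k IH =>
    intro G A M hc hne hconf hmo huniq
    classical
    -- the partner function of the matching
    have hpa0 : ∀ v, v ∈ A → ∃ w, s(v, w) ∈ M ∧ ∀ w', s(v, w') ∈ M → w' = w := by
      intro v hv
      obtain ⟨e, ⟨heM, hve⟩, hU⟩ := hmo.2.2 v hv
      refine ⟨Sym2.Mem.other hve, ?_, ?_⟩
      · rw [Sym2.other_spec hve]; exact heM
      · intro w' hw'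
        have h1 : s(v, w') = e := hU _ ⟨hw', Sym2.mem_mk_left _ _⟩
        have h2 := Sym2.other_spec hve
        rw [← h2] at h1
        rcases Sym2.eq_iff.1 h1 with ⟨-, h⟩ | ⟨h3, h4⟩
        · exact h
        · rw [h4]; exact h3
    obtain ⟨pa, hpa⟩ : ∃ pa : V → V,
        ∀ v ∈ A, s(v, pa v) ∈ M ∧ ∀ w, s(v, w) ∈ M → w = pa v := by
      refine ⟨fun v => if h : v ∈ A then Classical.choose (hpa0 v h) else v, fun v hv => ?_⟩
      simp only [dif_pos hv]
      exact ⟨(Classical.choose_spec (hpa0 v hv)).1, (Classical.choose_spec (hpa0 v hv)).2⟩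
    have hpaM : ∀ v ∈ A, s(v, pa v) ∈ M := fun v hv => (hpa v hv).1
    have hpaU : ∀ v ∈ A, ∀ w, s(v, w) ∈ M → w = pa v := fun v hv => (hpa v hv).2
    have hpaA : ∀ v ∈ A, pa v ∈ A := fun v hv => hmo.2.1 _ (hpaM v hv) _ (Sym2.mem_mk_right _ _)
    have hpane : ∀ v ∈ A, pa v ≠ v := by
      intro v hv h
      have h2 := hmo.1 (hpaM v hv)
      rw [h] at h2
      exact G.irrefl ((SimpleGraph.mem_edgeSet G).1 h2)
    have hpainv : ∀ v ∈ A, pa (pa v) = v := by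
      intro v hv
      have h2 := hpaM v hv
      rw [Sym2.eq_swap] at h2
      exact (hpaU (pa v) (hpaA v hv) v h2).symm
    have hMedge : ∀ v ∈ A, ∀ e ∈ M, v ∈ e → e = s(v, pa v) := by
      intro v hv e he hve
      obtain ⟨f, -, hf⟩ := hmo.2.2 v hv
      rw [hf e ⟨he, hve⟩, hf _ ⟨hpaM v hv, Sym2.mem_mk_left _ _⟩]
    by_cases hnp : ∀ v ∈ A, ∃ w, G.Adj v w ∧ s(v, w) ∉ M
    case neg =>
      -- a vertex all of whose edges are the matching edge: that edge is a bridge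
      push_neg at hnp
      obtain ⟨v, hvA, hall⟩ := hnp
      refine ⟨s(v, pa v), hpaM v hvA, ?_⟩
      rw [SimpleGraph.isBridge_iff]
      apply no_reach_of_isolated (fun h => hpane v hvA h.symm)
      intro w hw
      rw [SimpleGraph.deleteEdges, SimpleGraph.sdiff_adj, SimpleGraph.fromEdgeSet_adj] at hw
      obtain ⟨hadj, hne2⟩ := hw
      have hM1 : s(v, w) ∈ M := hall w hadj
      have hwp : w = pa v := hpaU v hvA w hM1
      exact hne2 ⟨by rw [hwp]; rfl, hadj.ne⟩
    case pos =>
      obtain ⟨np, hnp'⟩ : ∃ np : V → V, ∀ v ∈ A, G.Adj v (np v) ∧ s(v, np v) ∉ M := by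
        refine ⟨fun v => if h : v ∈ A then Classical.choose (hnp v h) else v, fun v hv => ?_⟩
        simp only [dif_pos hv]
        exact Classical.choose_spec (hnp v hv)
      obtain ⟨v₀, hv₀⟩ := hne
      set a : ℕ → V := fun n => Nat.rec v₀ (fun m x => if m % 2 = 0 then pa x else np x) n
        with hadef
      have haS : ∀ n, a (n+1) = if n % 2 = 0 then pa (a n) else np (a n) := fun n => rfl
      have haA : ∀ n, a n ∈ A := by
        intro n
        induction n with
        | zero => exact hv₀
        | succ m ih =>
          rw [haS]
          split
          · exact hpaA _ ih
          · exact hconf _ _ (hnp' _ ih).1.symm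
      have haM : ∀ n, n % 2 = 0 → s(a n, a (n+1)) ∈ M := by
        intro n h
        rw [haS, if_pos h]
        exact hpaM _ (haA n)
      have haE : ∀ n, n % 2 = 1 → s(a n, a (n+1)) ∈ G.edgeSet ∧ s(a n, a (n+1)) ∉ M := by
        intro n h
        rw [haS, if_neg (by omega)]
        exact ⟨(SimpleGraph.mem_edgeSet G).2 (hnp' _ (haA n)).1, (hnp' _ (haA n)).2⟩
      have haEdge : ∀ n, s(a n, a (n+1)) ∈ G.edgeSet := by
        intro n
        rcases Nat.mod_two_eq_zero_or_one n with h | h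
        · exact hmo.1 (haM n h)
        · exact (haE n h).1
      -- first repetition of the alternating sequence
      have hrep : ∃ j, ∃ i, i < j ∧ a i = a j := by
        obtain ⟨s, t, hst, h⟩ := Finite.exists_ne_map_eq_of_infinite a
        rcases Nat.lt_or_ge s t with hlt | hge
        · exact ⟨t, s, hlt, h⟩
        · exact ⟨s, t, by omega, h.symm⟩
      obtain ⟨i, hij, haij⟩ := Nat.find_spec hrep
      set j := Nat.find hrep with hjdef
      have hinj : ∀ s, s < j → ∀ t, t < j → a s = a t → s = t := by
        intro s hs t ht h
        by_contra hne'
        rcases Nat.lt_or_ge s t with hlt | hge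
        · exact Nat.find_min hrep ht ⟨s, hlt, h⟩
        · exact Nat.find_min hrep hs ⟨t, by omega, h.symm⟩
      have hji2 : i + 2 ≤ j := by
        by_contra h
        have hj1 : j = i + 1 := by omega
        have hloop : a (i+1) = a i := by rw [← hj1]; exact haij.symm
        rcases Nat.mod_two_eq_zero_or_one i with hi | hi
        · have h2 := hmo.1 (haM i hi)
          rw [hloop] at h2
          exact G.irrefl ((SimpleGraph.mem_edgeSet G).1 h2)
        · have h2 := (haE i hi).1
          rw [hloop] at h2
          exact G.irrefl ((SimpleGraph.mem_edgeSet G).1 h2)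
      rcases Nat.mod_two_eq_zero_or_one i with hi | hi <;>
        rcases Nat.mod_two_eq_zero_or_one j with hj | hj
      · -- i even, j even : alternating cycle
        exfalso
        apply seg_false hmo huniq a haA haM haE i (j - i) hi (by omega) (by omega)
        · intro s hs t ht h
          have := hinj (i+s) (by omega) (i+t) (by omega) h
          omega
        · have h1 : i + (j - i) - 1 = j - 1 := by omega
          rw [h1]
          have h2 := haE (j-1) (by omega)
          have h3 : (j-1) + 1 = j := by omega
          rw [h3] at h2
          rw [← haij] at h2
          exact h2
      · -- i even, j odd : impossible
        exfalso
        have h1 : s(a (j-1), a j) ∈ M := by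
          have h2 := haM (j-1) (by omega)
          have h3 : (j-1)+1 = j := by omega
          rwa [h3] at h2
        have h2 : a (j-1) = pa (a j) := by
          apply hpaU (a j) (haA j)
          rwa [Sym2.eq_swap]
        rw [← haij] at h2
        have h3 : a (i+1) = pa (a i) := hpaU (a i) (haA i) _ (haM i hi)
        have h4 : a (j-1) = a (i+1) := by rw [h2, ← h3]
        have h5 : j - 1 = i + 1 := hinj _ (by omega) _ (by omega) h4
        have h6 := haE (i+1) (by omega)
        have h7 : (i+1)+1 = j := by omega
        rw [h7, ← haij] at h6
        rw [Sym2.eq_swap] at h6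
        exact h6.2 (haM i hi)
      · -- i odd, j even : the blossom case
        -- ===== the blossom case =====
        have hji3 : i + 3 ≤ j := by omega
        have hi1 : 1 ≤ i := by omega
        set B : Set V := a '' (Set.Ico i j) with hBdef
        have hBmem : ∀ v, v ∈ B ↔ ∃ r, (i ≤ r ∧ r < j) ∧ a r = v := by
          intro v
          rw [hBdef, Set.mem_image]
          constructor
          · rintro ⟨r, hr, h⟩
            rw [Set.mem_Ico] at hr
            exact ⟨r, hr, h⟩
          · rintro ⟨r, hr, h⟩
            exact ⟨r, Set.mem_Ico.2 hr, h⟩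
        have hzB : a i ∈ B := (hBmem _).2 ⟨i, ⟨le_refl i, by omega⟩, rfl⟩
        have hzA : a i ∈ A := haA i
        have hmzA : a (i-1) ∈ A := haA _
        have hmzM : s(a i, a (i-1)) ∈ M := by
          have h2 := haM (i-1) (by omega)
          have h3 : (i-1)+1 = i := by omega
          rw [h3] at h2
          rwa [Sym2.eq_swap] at h2
        have hpz : pa (a i) = a (i-1) := (hpaU _ hzA _ hmzM).symm
        have hpmz : pa (a (i-1)) = a i := by
          have h2 := hpainv (a i) hzA
          rwa [hpz] at h2
        have hmznB : a (i-1) ∉ B := by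
          intro hB
          obtain ⟨r, hr, h⟩ := (hBmem _).1 hB
          have := hinj r (by omega) (i-1) (by omega) h
          omega
        have hzmz : a i ≠ a (i-1) := by
          intro h
          have := hinj i (by omega) (i-1) (by omega) h
          omega
        have hBA : B ⊆ A := by
          intro v hv
          obtain ⟨r, -, h⟩ := (hBmem _).1 hv
          rw [← h]; exact haA r
        have hpaB : ∀ b ∈ B, b ≠ a i → pa b ∈ B ∧ pa b ≠ a i := by
          intro b hb hbz
          obtain ⟨r, ⟨hr1, hr2⟩, rfl⟩ := (hBmem _).1 hb
          have hri : r ≠ i := fun h => hbz (by rw [h])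
          have hir : i < r := by omega
          rcases Nat.mod_two_eq_zero_or_one r with hre | hro
          · have h1 : a (r+1) = pa (a r) := hpaU (a r) (haA r) _ (haM r hre)
            have h2 : r + 1 < j := by omega
            constructor
            · rw [← h1]; exact (hBmem _).2 ⟨r+1, ⟨by omega, h2⟩, rfl⟩
            · rw [← h1]
              intro h
              have := hinj (r+1) h2 i (by omega) h
              omega
          · have h0 := haM (r-1) (by omega)
            have h1' : (r-1)+1 = r := by omega
            rw [h1'] at h0
            have h1 : a (r-1) = pa (a r) := by
              apply hpaU (a r) (haA r)
              rwa [Sym2.eq_swap]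
            have hir2 : i + 2 ≤ r := by omega
            constructor
            · rw [← h1]; exact (hBmem _).2 ⟨r-1, ⟨by omega, by omega⟩, rfl⟩
            · rw [← h1]
              intro h
              have := hinj (r-1) (by omega) i (by omega) h
              omega
        -- no edge from the interior of the blossom back to the stem vertex `a (i-1)`
        have hb2 : ∀ r, i < r → r < j → ¬ G.Adj (a r) (a (i-1)) := by
          intro r hir hrj hadj
          have hrB : a r ∈ B := (hBmem _).2 ⟨r, ⟨by omega, hrj⟩, rfl⟩
          have hrnz : a r ≠ a i := by
            intro h
            have := hinj r (by omega) i (by omega) h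
            omega
          have hnM : s(a r, a (i-1)) ∉ M := by
            intro hM'
            have h1 : a (i-1) = pa (a r) := hpaU (a r) (haA r) _ hM'
            have h2 := hpaB (a r) hrB hrnz
            rw [← h1] at h2
            exact hmznB h2.1
          rcases Nat.mod_two_eq_zero_or_one r with hre | hro
          · -- r even : cycle  a (i-1), a i, a (j-1), a (j-2), ..., a r
            obtain ⟨d, hd0, hd1, hd2'⟩ : ∃ d : ℕ → ℕ, d 0 = i - 1 ∧ d 1 = i ∧
                ∀ n, d (n+2) = j - 1 - n :=
              ⟨fun t => match t with
                | 0 => i - 1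
                | 1 => i
                | (n+2) => j - 1 - n, rfl, rfl, fun n => rfl⟩
            have hd2 : ∀ m, 2 ≤ m → d m = j + 1 - m := by
              intro m hm
              obtain ⟨n, rfl⟩ : ∃ n, m = n + 2 := ⟨m - 2, by omega⟩
              rw [hd2' n]
              omega
            have hk2 : 2 * ((j - r + 2)/2) = j - r + 2 := by omega
            have hdlt : ∀ t, t < j - r + 2 → d t < j := by
              intro t ht
              match t with
              | 0 => rw [hd0]; omega
              | 1 => rw [hd1]; omega
              | (n+2) => rw [hd2 _ (by omega)]; omega
            apply flip_false hmo huniq ((j - r + 2)/2) (by omega) (fun t => a (d t))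
            · intro t ht; exact haA _
            · intro s hs t ht h
              rw [hk2] at hs ht
              have hds := hinj _ (hdlt s hs) _ (hdlt t ht) h
              match s, t with
              | 0, 0 => rfl
              | 0, 1 => rw [hd0, hd1] at hds; omega
              | 0, (n+2) => rw [hd0, hd2 _ (by omega)] at hds; omega
              | 1, 0 => rw [hd1, hd0] at hds; omega
              | 1, 1 => rfl
              | 1, (n+2) => rw [hd1, hd2 _ (by omega)] at hds; omega
              | (n+2), 0 => rw [hd2 _ (by omega), hd0] at hds; omega
              | (n+2), 1 => rw [hd2 _ (by omega), hd1] at hds; omega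
              | (m+2), (n+2) => rw [hd2 _ (by omega), hd2 _ (by omega)] at hds; omega
            · intro u hu
              rcases Nat.eq_zero_or_pos u with rfl | hup
              · show s(a (d 0), a (d 1)) ∈ M
                rw [hd0, hd1]
                rwa [Sym2.eq_swap]
              · have he1 : d (2*u) = j + 1 - 2*u := hd2 _ (by omega)
                have he2 : d (2*u+1) = j - 2*u := by rw [hd2 _ (by omega)]; omega
                show s(a (d (2*u)), a (d (2*u+1))) ∈ M
                rw [he1, he2]
                have h3 := haM (j - 2*u) (by omega)
                have h4 : j - 2*u + 1 = j + 1 - 2*u := by omega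
                rw [h4] at h3
                rwa [Sym2.eq_swap] at h3
            · intro u hu
              rw [hk2]
              rcases Nat.lt_or_ge (2*u+2) (j - r + 2) with h3 | h3
              · rw [Nat.mod_eq_of_lt h3]
                rcases Nat.eq_zero_or_pos u with rfl | hup
                · show s(a (d 1), a (d 2)) ∈ G.edgeSet ∧ s(a (d 1), a (d 2)) ∉ M
                  rw [hd1, hd2 _ (by omega)]
                  have h5 := haE (j-1) (by omega)
                  have h6 : (j-1)+1 = j := by omega
                  rw [h6, ← haij] at h5
                  have h7 : j + 1 - 2 = j - 1 := by omega
                  rw [h7]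
                  constructor
                  · rw [Sym2.eq_swap]; exact h5.1
                  · rw [Sym2.eq_swap]; exact h5.2
                · have he2 : d (2*u+1) = j - 2*u := by rw [hd2 _ (by omega)]; omega
                  have he3 : d (2*u+2) = j - 1 - 2*u := by rw [hd2 _ (by omega)]; omega
                  show s(a (d (2*u+1)), a (d (2*u+2))) ∈ G.edgeSet ∧
                    s(a (d (2*u+1)), a (d (2*u+2))) ∉ M
                  rw [he2, he3]
                  have h5 := haE (j - 1 - 2*u) (by omega)
                  have h6 : (j - 1 - 2*u)+1 = j - 2*u := by omega
                  rw [h6] at h5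
                  constructor
                  · rw [Sym2.eq_swap]; exact h5.1
                  · rw [Sym2.eq_swap]; exact h5.2
              · have h4 : 2*u+2 = j - r + 2 := by omega
                rw [h4, Nat.mod_self]
                have he1 : d (2*u+1) = r := by rw [hd2 _ (by omega)]; omega
                show s(a (d (2*u+1)), a (d 0)) ∈ G.edgeSet ∧ s(a (d (2*u+1)), a (d 0)) ∉ M
                rw [he1, hd0]
                exact ⟨(SimpleGraph.mem_edgeSet G).2 hadj, hnM⟩
          · -- r odd : contiguous segment from  i-1  to  r
            apply seg_false hmo huniq a haA haM haE (i-1) (r - i + 2) (by omega) (by omega)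
              (by omega)
            · intro s hs t ht h
              have := hinj (i-1+s) (by omega) (i-1+t) (by omega) h
              omega
            · have h1 : (i-1) + (r-i+2) - 1 = r := by omega
              rw [h1]
              exact ⟨(SimpleGraph.mem_edgeSet G).2 hadj, hnM⟩
        -- ===== contraction of the blossom =====
        obtain ⟨p, hpB, hpnB⟩ : ∃ p : V → V, (∀ u ∈ B, p u = a i) ∧ (∀ u, u ∉ B → p u = u) :=
          ⟨fun u => if u ∈ B then a i else u, fun u hu => if_pos hu, fun u hu => if_neg hu⟩
        obtain ⟨G2, hG2⟩ : ∃ G2 : SimpleGraph V, ∀ x y, G2.Adj x y ↔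
            (x ≠ y ∧ (x ∉ B ∨ x = a i) ∧ (y ∉ B ∨ y = a i) ∧
              ∃ u w, G.Adj u w ∧ p u = x ∧ p w = y) := by
          refine ⟨⟨fun x y => x ≠ y ∧ (x ∉ B ∨ x = a i) ∧ (y ∉ B ∨ y = a i) ∧
              ∃ u w, G.Adj u w ∧ p u = x ∧ p w = y, ?_, ?_⟩, fun x y => Iff.rfl⟩
          · refine ⟨?_⟩; rintro x y ⟨h1, h2, h3, u, w, h4, h5, h6⟩
            exact ⟨h1.symm, h3, h2, w, u, h4.symm, h6, h5⟩
          · refine ⟨?_⟩; rintro x ⟨h1, -⟩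
            exact h1 rfl
        set M2 : Set (Sym2 V) := {e | e ∈ M ∧ ∀ y ∈ e, y ∉ B} ∪ {s(a i, a (i-1))} with hM2def
        have hM2mem : ∀ e, e ∈ M2 ↔ ((e ∈ M ∧ ∀ y ∈ e, y ∉ B) ∨ e = s(a i, a (i-1))) := by
          intro e; rw [hM2def]; rfl
        set A2 : Set V := (A \ B) ∪ {a i} with hA2def
        have hA2mem : ∀ v, v ∈ A2 ↔ ((v ∈ A ∧ v ∉ B) ∨ v = a i) := by
          intro v; rw [hA2def]; rfl
        have hzA2 : a i ∈ A2 := (hA2mem _).2 (Or.inr rfl)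
        have hmzA2 : a (i-1) ∈ A2 := (hA2mem _).2 (Or.inl ⟨hmzA, hmznB⟩)
        have hG2zmz : G2.Adj (a i) (a (i-1)) :=
          (hG2 _ _).2 ⟨hzmz, Or.inr rfl, Or.inl hmznB, a i, a (i-1),
            (SimpleGraph.mem_edgeSet G).1 (hmo.1 hmzM), hpB _ hzB, hpnB _ hmznB⟩
        have hG2away : ∀ x y, G.Adj x y → x ∉ B → y ∉ B → G2.Adj x y := by
          intro x y h hx hy
          exact (hG2 _ _).2 ⟨h.ne, Or.inl hx, Or.inl hy, x, y, h, hpnB _ hx, hpnB _ hy⟩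
        have hconf2 : ∀ u w, G2.Adj u w → u ∈ A2 := by
          intro u w h
          obtain ⟨-, huB, -, u', w', hadj, hpu', -⟩ := (hG2 _ _).1 h
          by_cases h' : u' ∈ B
          · rw [hpB u' h'] at hpu'
            rw [← hpu']
            exact hzA2
          · rw [hpnB u' h'] at hpu'
            subst hpu'
            rcases huB with h2 | h2
            · exact (hA2mem _).2 (Or.inl ⟨hconf _ _ hadj, h2⟩)
            · exact (hA2mem _).2 (Or.inr h2)
        have hpaNotB : ∀ v, v ∈ A → v ∉ B → v ≠ a (i-1) → pa v ∉ B := by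
          intro v hv hvB hvmz hpvB
          by_cases h : pa v = a i
          · apply hvmz
            have h2 := hpainv v hv
            rw [h, hpz] at h2
            exact h2.symm
          · have h2 := hpaB (pa v) hpvB h
            rw [hpainv v hv] at h2
            exact hvB h2.1
        have hmo2 : MatchingOn G2 A2 M2 := by
          refine ⟨?_, ?_, ?_⟩
          · intro e he
            rcases (hM2mem e).1 he with ⟨heM, hnB⟩ | rfl
            · obtain ⟨x', y', rfl⟩ : ∃ x y, e = s(x, y) := by
                induction e using Sym2.ind with
                | _ c d => exact ⟨c, d, rfl⟩
              rw [SimpleGraph.mem_edgeSet]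
              exact hG2away x' y' ((SimpleGraph.mem_edgeSet G).1 (hmo.1 heM))
                (hnB _ (Sym2.mem_mk_left _ _)) (hnB _ (Sym2.mem_mk_right _ _))
            · rw [SimpleGraph.mem_edgeSet]
              exact hG2zmz
          · intro e he v hv
            rcases (hM2mem e).1 he with ⟨heM, hnB⟩ | rfl
            · exact (hA2mem v).2 (Or.inl ⟨hmo.2.1 e heM v hv, hnB v hv⟩)
            · rcases Sym2.mem_iff.1 hv with rfl | rfl
              · exact hzA2
              · exact hmzA2
          · intro v hv
            rcases (hA2mem v).1 hv with ⟨hvA, hvB⟩ | rfl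
            · by_cases hvmz : v = a (i-1)
              · subst hvmz
                refine ⟨s(a i, a (i-1)), ⟨(hM2mem _).2 (Or.inr rfl), Sym2.mem_mk_right _ _⟩, ?_⟩
                rintro e' ⟨he', hve'⟩
                rcases (hM2mem e').1 he' with ⟨heM, hnB⟩ | h
                · exfalso
                  have h2 := hMedge _ hmzA e' heM hve'
                  rw [hpmz] at h2
                  refine hnB (a i) ?_ hzB
                  rw [h2]; exact Sym2.mem_mk_right _ _
                · exact h
              · refine ⟨s(v, pa v), ⟨(hM2mem _).2 (Or.inl ⟨hpaM v hvA, ?_⟩),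
                  Sym2.mem_mk_left _ _⟩, ?_⟩
                · intro y hy
                  rcases Sym2.mem_iff.1 hy with rfl | rfl
                  · exact hvB
                  · exact hpaNotB v hvA hvB hvmz
                · rintro e' ⟨he', hve'⟩
                  rcases (hM2mem e').1 he' with ⟨heM, hnB⟩ | h
                  · exact hMedge _ hvA e' heM hve'
                  · exfalso
                    subst h
                    rcases Sym2.mem_iff.1 hve' with rfl | rfl
                    · exact hvB hzB
                    · exact hvmz rfl
            · refine ⟨s(a i, a (i-1)), ⟨(hM2mem _).2 (Or.inr rfl), Sym2.mem_mk_left _ _⟩, ?_⟩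
              rintro e' ⟨he', hve'⟩
              rcases (hM2mem e').1 he' with ⟨heM, hnB⟩ | h
              · exact absurd hzB (hnB _ hve')
              · exact h
        -- edges of a G2-matching avoiding the contracted vertex are plain G-edges
        have hNaway : ∀ (N : Set (Sym2 V)), MatchingOn G2 A2 N → ∀ e ∈ N, a i ∉ e →
            (e ∈ G.edgeSet ∧ ∀ y ∈ e, y ∈ A ∧ y ∉ B) := by
          intro N hN e heN hze
          obtain ⟨x', y', rfl⟩ : ∃ x y, e = s(x, y) := by
            induction e using Sym2.ind with
            | _ c d => exact ⟨c, d, rfl⟩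
          have h1 : ∀ y ∈ s(x', y'), y ∈ A ∧ y ∉ B := by
            intro y hy
            have h2 := hN.2.1 _ heN y hy
            rcases (hA2mem y).1 h2 with h3 | h3
            · exact h3
            · exfalso
              rw [h3] at hy
              exact hze hy
          refine ⟨?_, h1⟩
          have h2 := hN.1 heN
          rw [SimpleGraph.mem_edgeSet] at h2 ⊢
          obtain ⟨-, -, -, u, w, hadj, hpu, hpw⟩ := (hG2 _ _).1 h2
          have hu' : u = x' := by
            by_cases h : u ∈ B
            · rw [hpB u h] at hpu
              exfalso
              apply hze
              rw [← hpu]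
              exact Sym2.mem_mk_left _ _
            · rwa [hpnB u h] at hpu
          have hw' : w = y' := by
            by_cases h : w ∈ B
            · rw [hpB w h] at hpw
              exfalso
              apply hze
              rw [← hpw]
              exact Sym2.mem_mk_right _ _
            · rwa [hpnB w h] at hpw
          rw [hu', hw'] at hadj
          exact hadj
        -- edge helpers
        have hedgem : ∀ t, 1 ≤ t → s(a t, a (t-1)) ∈ G.edgeSet := by
          intro t ht
          have h2 := haEdge (t-1)
          have h3 : t - 1 + 1 = t := by omega
          rw [h3] at h2
          rwa [Sym2.eq_swap] at h2
        have hedgewrapzi : s(a i, a (j-1)) ∈ G.edgeSet := by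
          have h2 := haEdge (j-1)
          have h3 : j - 1 + 1 = j := by omega
          rw [h3, ← haij] at h2
          rwa [Sym2.eq_swap] at h2
        have hedgewrapji : s(a (j-1), a i) ∈ G.edgeSet := by
          rwa [Sym2.eq_swap] at hedgewrapzi
        -- a perfect rematching of the blossom avoiding the vertex `a r`
        have hsigma : ∀ r, i < r → r < j → ∃ σ : ℕ → ℕ, ∀ t, i ≤ t → t < j → t ≠ r →
            ((i ≤ σ t ∧ σ t < j ∧ σ t ≠ r) ∧ σ (σ t) = t ∧
              s(a t, a (σ t)) ∈ G.edgeSet) := by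
          intro r hir hrj
          rcases Nat.mod_two_eq_zero_or_one r with hre | hro
          · -- r even
            set σ : ℕ → ℕ := fun t => if t = i then j-1 else if t = j-1 then i else
              if t < r then (if t % 2 = 0 then t+1 else t-1) else
                (if t % 2 = 1 then t+1 else t-1) with hσdef
            have hσval : ∀ t, σ t = if t = i then j-1 else if t = j-1 then i else
              if t < r then (if t % 2 = 0 then t+1 else t-1) else
                (if t % 2 = 1 then t+1 else t-1) := by
              intro t; rw [hσdef]
            refine ⟨σ, ?_⟩
            intro t ht1 ht2 ht3
            by_cases hti : t = i
            · have hv1 : σ t = j - 1 := by rw [hσval, if_pos hti]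
              have hv2 : σ (j-1) = i := by
                rw [hσval, if_neg (by omega), if_pos rfl]
              rw [hv1, hv2, hti]
              exact ⟨⟨by omega, by omega, by omega⟩, rfl, hedgewrapzi⟩
            · by_cases htj : t = j - 1
              · have hv1 : σ t = i := by rw [hσval, if_neg hti, if_pos htj]
                have hv2 : σ i = j - 1 := by rw [hσval, if_pos rfl]
                rw [hv1, hv2, htj]
                exact ⟨⟨le_refl i, by omega, by omega⟩, rfl, hedgewrapji⟩
              · by_cases h1 : t < r
                · have hit : i < t := by omega
                  rcases Nat.mod_two_eq_zero_or_one t with ht | ht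
                  · have hv1 : σ t = t + 1 := by
                      rw [hσval, if_neg hti, if_neg htj, if_pos h1, if_pos ht]
                    have hv2 : σ (t+1) = t := by
                      rw [hσval, if_neg (by omega), if_neg (by omega), if_pos (by omega),
                        if_neg (by omega)]
                      omega
                    rw [hv1, hv2]
                    exact ⟨⟨by omega, by omega, by omega⟩, rfl, haEdge t⟩
                  · have hv1 : σ t = t - 1 := by
                      rw [hσval, if_neg hti, if_neg htj, if_pos h1, if_neg (by omega)]
                    have hv2 : σ (t-1) = t := by
                      rw [hσval, if_neg (by omega), if_neg (by omega), if_pos (by omega),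
                        if_pos (by omega)]
                      omega
                    rw [hv1, hv2]
                    exact ⟨⟨by omega, by omega, by omega⟩, rfl, hedgem t (by omega)⟩
                · have h2 : r < t := by omega
                  rcases Nat.mod_two_eq_zero_or_one t with ht | ht
                  · have hv1 : σ t = t - 1 := by
                      rw [hσval, if_neg hti, if_neg htj, if_neg h1, if_neg (by omega)]
                    have hv2 : σ (t-1) = t := by
                      rw [hσval, if_neg (by omega), if_neg (by omega), if_neg (by omega),
                        if_pos (by omega)]
                      omega
                    rw [hv1, hv2]
                    exact ⟨⟨by omega, by omega, by omega⟩, rfl, hedgem t (by omega)⟩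
                  · have hv1 : σ t = t + 1 := by
                      rw [hσval, if_neg hti, if_neg htj, if_neg h1, if_pos ht]
                    have hv2 : σ (t+1) = t := by
                      rw [hσval, if_neg (by omega), if_neg (by omega), if_neg (by omega),
                        if_neg (by omega)]
                      omega
                    rw [hv1, hv2]
                    exact ⟨⟨by omega, by omega, by omega⟩, rfl, haEdge t⟩
          · -- r odd
            set σ : ℕ → ℕ := fun t => if t < r then (if t % 2 = 1 then t+1 else t-1) else
              (if t % 2 = 0 then t+1 else t-1) with hσdef
            have hσval : ∀ t, σ t = if t < r then (if t % 2 = 1 then t+1 else t-1) else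
              (if t % 2 = 0 then t+1 else t-1) := by
              intro t; rw [hσdef]
            refine ⟨σ, ?_⟩
            intro t ht1 ht2 ht3
            by_cases h1 : t < r
            · rcases Nat.mod_two_eq_zero_or_one t with ht | ht
              · have hit : i < t := by omega
                have hv1 : σ t = t - 1 := by rw [hσval, if_pos h1, if_neg (by omega)]
                have hv2 : σ (t-1) = t := by
                  rw [hσval, if_pos (by omega), if_pos (by omega)]
                  omega
                rw [hv1, hv2]
                exact ⟨⟨by omega, by omega, by omega⟩, rfl, hedgem t (by omega)⟩
              · have hv1 : σ t = t + 1 := by rw [hσval, if_pos h1, if_pos ht]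
                have hv2 : σ (t+1) = t := by
                  rw [hσval, if_pos (by omega), if_neg (by omega)]
                  omega
                rw [hv1, hv2]
                exact ⟨⟨by omega, by omega, by omega⟩, rfl, haEdge t⟩
            · have h2 : r < t := by omega
              rcases Nat.mod_two_eq_zero_or_one t with ht | ht
              · have hv1 : σ t = t + 1 := by rw [hσval, if_neg h1, if_pos ht]
                have hv2 : σ (t+1) = t := by
                  rw [hσval, if_neg (by omega), if_neg (by omega)]
                  omega
                rw [hv1, hv2]
                exact ⟨⟨by omega, by omega, by omega⟩, rfl, haEdge t⟩
              · have hv1 : σ t = t - 1 := by rw [hσval, if_neg h1, if_neg (by omega)]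
                have hv2 : σ (t-1) = t := by
                  rw [hσval, if_neg (by omega), if_pos (by omega)]
                  omega
                rw [hv1, hv2]
                exact ⟨⟨by omega, by omega, by omega⟩, rfl, hedgem t (by omega)⟩
        -- ===== uniqueness of the contracted matching =====
        have huniq2 : ∀ N : Set (Sym2 V), MatchingOn G2 A2 N → N = M2 := by
          intro N hN
          obtain ⟨ez, ⟨hezN, hzez⟩, hezU⟩ := hN.2.2 (a i) hzA2
          obtain ⟨x, hxez⟩ : ∃ x, ez = s(a i, x) :=
            ⟨Sym2.Mem.other hzez, (Sym2.other_spec hzez).symm⟩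
          subst hxez
          have hG2ez : G2.Adj (a i) x := by
            have h2 := hN.1 hezN
            rwa [SimpleGraph.mem_edgeSet] at h2
          obtain ⟨hne_zx, -, hxB', u, w, huw, hpu, hpw⟩ := (hG2 _ _).1 hG2ez
          have hxnB : x ∉ B := by
            rcases hxB' with h | h
            · exact h
            · exact absurd h.symm hne_zx
          have hwx : w = x := by
            by_cases h : w ∈ B
            · rw [hpB w h] at hpw
              exact absurd hpw hne_zx
            · rwa [hpnB w h] at hpw
          rw [hwx] at huw
          have hxA2 : x ∈ A2 := hN.2.1 _ hezN x (Sym2.mem_mk_right _ _)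
          have hxA : x ∈ A := by
            rcases (hA2mem x).1 hxA2 with h | h
            · exact h.1
            · exact absurd h.symm hne_zx
          have huB : u ∈ B := by
            by_cases h : u ∈ B
            · exact h
            · rw [hpnB u h] at hpu
              rw [hpu] at h
              exact absurd hzB h
          by_cases hzx : G.Adj (a i) x
          · -- the contracted vertex is adjacent to x in G : rebuild a matching of A
            set NG : Set (Sym2 V) := {e | e ∈ N ∧ a i ∉ e} ∪ {s(a i, x)} ∪
              {e | e ∈ M ∧ ∀ y ∈ e, y ∈ B} with hNGdef
            have hNGmem : ∀ e, e ∈ NG ↔ (((e ∈ N ∧ a i ∉ e) ∨ e = s(a i, x)) ∨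
                (e ∈ M ∧ ∀ y ∈ e, y ∈ B)) := by
              intro e; rw [hNGdef]; rfl
            have hNGmo : MatchingOn G A NG := by
              refine ⟨?_, ?_, ?_⟩
              · intro e he
                rcases (hNGmem e).1 he with (⟨heN, hznotin⟩ | rfl) | ⟨heM, -⟩
                · exact (hNaway N hN e heN hznotin).1
                · exact (SimpleGraph.mem_edgeSet G).2 hzx
                · exact hmo.1 heM
              · intro e he v hv
                rcases (hNGmem e).1 he with (⟨heN, hznotin⟩ | rfl) | ⟨heM, -⟩
                · exact ((hNaway N hN e heN hznotin).2 v hv).1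
                · rcases Sym2.mem_iff.1 hv with rfl | rfl
                  · exact hzA
                  · exact hxA
                · exact hmo.2.1 e heM v hv
              · intro v hv
                by_cases hvB : v ∈ B
                · by_cases hvz : v = a i
                  · subst hvz
                    refine ⟨s(a i, x), ⟨(hNGmem _).2 (Or.inl (Or.inr rfl)),
                      Sym2.mem_mk_left _ _⟩, ?_⟩
                    rintro e' ⟨he', hve'⟩
                    rcases (hNGmem e').1 he' with (⟨heN, hznotin⟩ | rfl) | ⟨heM, hBin⟩
                    · exact absurd hve' hznotin
                    · rfl
                    · exfalso
                      have h2 := hMedge _ hzA e' heM hve'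
                      rw [hpz] at h2
                      apply hmznB
                      apply hBin
                      rw [h2]
                      exact Sym2.mem_mk_right _ _
                  · have hpvB := hpaB v hvB hvz
                    refine ⟨s(v, pa v), ⟨(hNGmem _).2 (Or.inr ⟨hpaM v (hBA hvB), ?_⟩),
                      Sym2.mem_mk_left _ _⟩, ?_⟩
                    · intro y hy
                      rcases Sym2.mem_iff.1 hy with rfl | rfl
                      · exact hvB
                      · exact hpvB.1
                    · rintro e' ⟨he', hve'⟩
                      rcases (hNGmem e').1 he' with (⟨heN, hznotin⟩ | rfl) | ⟨heM, hBin⟩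
                      · exact absurd hvB ((hNaway N hN e' heN hznotin).2 v hve').2
                      · exfalso
                        rcases Sym2.mem_iff.1 hve' with h | h
                        · exact hvz h
                        · rw [h] at hvB
                          exact hxnB hvB
                      · exact hMedge _ (hBA hvB) e' heM hve'
                · by_cases hvx : v = x
                  · refine ⟨s(a i, x), ⟨(hNGmem _).2 (Or.inl (Or.inr rfl)), by
                      rw [hvx]; exact Sym2.mem_mk_right _ _⟩, ?_⟩
                    rintro e' ⟨he', hve'⟩
                    rw [hvx] at hve'
                    rcases (hNGmem e').1 he' with (⟨heN, hznotin⟩ | rfl) | ⟨heM, hBin⟩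
                    · exfalso
                      obtain ⟨f, -, hfU⟩ := hN.2.2 x hxA2
                      have h3 : e' = f := hfU e' ⟨heN, hve'⟩
                      have h4 : s(a i, x) = f := hfU _ ⟨hezN, Sym2.mem_mk_right _ _⟩
                      apply hznotin
                      rw [h3, ← h4]
                      exact Sym2.mem_mk_left _ _
                    · rfl
                    · exact absurd (hBin x hve') hxnB
                  · have hvA2 : v ∈ A2 := (hA2mem v).2 (Or.inl ⟨hv, hvB⟩)
                    obtain ⟨f, ⟨hfN, hvf⟩, hfU⟩ := hN.2.2 v hvA2
                    have hzf : a i ∉ f := by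
                      intro hzf
                      have h3 : f = s(a i, x) := hezU f ⟨hfN, hzf⟩
                      rw [h3] at hvf
                      rcases Sym2.mem_iff.1 hvf with h | h
                      · rw [h] at hvB
                        exact hvB hzB
                      · exact hvx h
                    refine ⟨f, ⟨(hNGmem _).2 (Or.inl (Or.inl ⟨hfN, hzf⟩)), hvf⟩, ?_⟩
                    rintro e' ⟨he', hve'⟩
                    rcases (hNGmem e').1 he' with (⟨heN, hznotin⟩ | rfl) | ⟨heM, hBin⟩
                    · exact hfU e' ⟨heN, hve'⟩
                    · exfalso
                      rcases Sym2.mem_iff.1 hve' with h | h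
                      · rw [h] at hvB
                        exact hvB hzB
                      · exact hvx h
                    · exact absurd (hBin v hve') hvB
            have hNGM := huniq NG hNGmo
            have hsx : s(a i, x) ∈ M := by
              rw [← hNGM]
              exact (hNGmem _).2 (Or.inl (Or.inr rfl))
            have hxmz : x = a (i-1) := by
              have h2 := hpaU _ hzA x hsx
              rwa [hpz] at h2
            have hsub : N ⊆ M2 := by
              intro e heN
              by_cases hze : a i ∈ e
              · have h3 : e = s(a i, x) := hezU e ⟨heN, hze⟩
                rw [h3, hxmz]
                exact (hM2mem _).2 (Or.inr rfl)
              · have h4 := hNaway N hN e heN hze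
                have h5 : e ∈ NG := (hNGmem _).2 (Or.inl (Or.inl ⟨heN, hze⟩))
                rw [hNGM] at h5
                exact (hM2mem _).2 (Or.inl ⟨h5, fun y hy => (h4.2 y hy).2⟩)
            exact matching_eq_of_subset hN hmo2 hsub
          · -- the contracted vertex is NOT adjacent to x : a chord from the blossom interior
            exfalso
            obtain ⟨r, ⟨hr1, hr2⟩, hru⟩ := (hBmem u).1 huB
            have hri : i < r := by
              rcases Nat.lt_or_ge i r with h | h
              · exact h
              · exfalso
                have h6 : r = i := by omega
                rw [h6] at hru
                rw [← hru] at huw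
                exact hzx huw
            have hunz : u ≠ a i := by
              rw [← hru]
              intro h
              have := hinj r (by omega) i (by omega) h
              omega
            obtain ⟨σ, hσ⟩ := hsigma r hri hr2
            set BM : Set (Sym2 V) := {e | ∃ t, i ≤ t ∧ t < j ∧ t ≠ r ∧ e = s(a t, a (σ t))}
              with hBMdef
            have hBMmem : ∀ e, e ∈ BM ↔ ∃ t, i ≤ t ∧ t < j ∧ t ≠ r ∧ e = s(a t, a (σ t)) := by
              intro e; rw [hBMdef]; rfl
            have hBMvert : ∀ e ∈ BM, ∀ y ∈ e, y ∈ B ∧ y ≠ u := by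
              intro e he y hy
              obtain ⟨t, ht1, ht2, ht3, rfl⟩ := (hBMmem e).1 he
              have hσt := hσ t ht1 ht2 ht3
              rcases Sym2.mem_iff.1 hy with rfl | rfl
              · refine ⟨(hBmem _).2 ⟨t, ⟨ht1, ht2⟩, rfl⟩, ?_⟩
                rw [← hru]
                intro h
                have := hinj t (by omega) r (by omega) h
                omega
              · refine ⟨(hBmem _).2 ⟨σ t, ⟨hσt.1.1, hσt.1.2.1⟩, rfl⟩, ?_⟩
                rw [← hru]
                intro h
                have h5 := hinj (σ t) (by omega) r (by omega) h
                exact hσt.1.2.2 h5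
            set NG : Set (Sym2 V) := {e | e ∈ N ∧ a i ∉ e} ∪ {s(u, x)} ∪ BM with hNGdef
            have hNGmem : ∀ e, e ∈ NG ↔ (((e ∈ N ∧ a i ∉ e) ∨ e = s(u, x)) ∨ e ∈ BM) := by
              intro e; rw [hNGdef]; rfl
            have hNGmo : MatchingOn G A NG := by
              refine ⟨?_, ?_, ?_⟩
              · intro e he
                rcases (hNGmem e).1 he with (⟨heN, hznotin⟩ | rfl) | hbm
                · exact (hNaway N hN e heN hznotin).1
                · exact (SimpleGraph.mem_edgeSet G).2 huw
                · obtain ⟨t, ht1, ht2, ht3, rfl⟩ := (hBMmem e).1 hbm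
                  exact (hσ t ht1 ht2 ht3).2.2
              · intro e he v hv
                rcases (hNGmem e).1 he with (⟨heN, hznotin⟩ | rfl) | hbm
                · exact ((hNaway N hN e heN hznotin).2 v hv).1
                · rcases Sym2.mem_iff.1 hv with rfl | rfl
                  · exact hBA huB
                  · exact hxA
                · exact hBA (hBMvert e hbm v hv).1
              · intro v hv
                by_cases hvB : v ∈ B
                · by_cases hvu : v = u
                  · refine ⟨s(u, x), ⟨(hNGmem _).2 (Or.inl (Or.inr rfl)), by
                      rw [hvu]; exact Sym2.mem_mk_left _ _⟩, ?_⟩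
                    rintro e' ⟨he', hve'⟩
                    rw [hvu] at hve'
                    rcases (hNGmem e').1 he' with (⟨heN, hznotin⟩ | rfl) | hbm
                    · exact absurd huB ((hNaway N hN e' heN hznotin).2 u hve').2
                    · rfl
                    · exact absurd rfl (hBMvert e' hbm u hve').2
                  · obtain ⟨t, ⟨ht1, ht2⟩, rfl⟩ := (hBmem v).1 hvB
                    have ht3 : t ≠ r := by
                      intro h
                      apply hvu
                      rw [h, hru]
                    have hσt := hσ t ht1 ht2 ht3
                    refine ⟨s(a t, a (σ t)), ⟨(hNGmem _).2 (Or.inr ((hBMmem _).2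
                      ⟨t, ht1, ht2, ht3, rfl⟩)), Sym2.mem_mk_left _ _⟩, ?_⟩
                    rintro e' ⟨he', hve'⟩
                    rcases (hNGmem e').1 he' with (⟨heN, hznotin⟩ | rfl) | hbm
                    · exact absurd hvB ((hNaway N hN e' heN hznotin).2 _ hve').2
                    · exfalso
                      rcases Sym2.mem_iff.1 hve' with h | h
                      · rw [← hru] at h
                        have := hinj t (by omega) r (by omega) h
                        exact ht3 this
                      · rw [h] at hvB
                        exact hxnB hvB
                    · obtain ⟨t', ht1', ht2', ht3', rfl⟩ := (hBMmem e').1 hbm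
                      have hσt' := hσ t' ht1' ht2' ht3'
                      rcases Sym2.mem_iff.1 hve' with h | h
                      · have h5 := hinj t' (by omega) t (by omega) h.symm
                        rw [h5]
                      · have h5 : σ t' = t := hinj (σ t') hσt'.1.2.1 t ht2 h.symm
                        have h6 := hσt'.2.1
                        rw [h5] at h6
                        rw [h5, ← h6]
                        exact Sym2.eq_swap
                · by_cases hvx : v = x
                  · refine ⟨s(u, x), ⟨(hNGmem _).2 (Or.inl (Or.inr rfl)), by
                      rw [hvx]; exact Sym2.mem_mk_right _ _⟩, ?_⟩
                    rintro e' ⟨he', hve'⟩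
                    rw [hvx] at hve'
                    rcases (hNGmem e').1 he' with (⟨heN, hznotin⟩ | rfl) | hbm
                    · exfalso
                      obtain ⟨f, -, hfU⟩ := hN.2.2 x hxA2
                      have h3 : e' = f := hfU e' ⟨heN, hve'⟩
                      have h4 : s(a i, x) = f := hfU _ ⟨hezN, Sym2.mem_mk_right _ _⟩
                      apply hznotin
                      rw [h3, ← h4]
                      exact Sym2.mem_mk_left _ _
                    · rfl
                    · exact absurd (hBMvert e' hbm x hve').1 hxnB
                  · have hvA2 : v ∈ A2 := (hA2mem v).2 (Or.inl ⟨hv, hvB⟩)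
                    obtain ⟨f, ⟨hfN, hvf⟩, hfU⟩ := hN.2.2 v hvA2
                    have hzf : a i ∉ f := by
                      intro hzf
                      have h3 : f = s(a i, x) := hezU f ⟨hfN, hzf⟩
                      rw [h3] at hvf
                      rcases Sym2.mem_iff.1 hvf with h | h
                      · rw [h] at hvB
                        exact hvB hzB
                      · exact hvx h
                    refine ⟨f, ⟨(hNGmem _).2 (Or.inl (Or.inl ⟨hfN, hzf⟩)), hvf⟩, ?_⟩
                    rintro e' ⟨he', hve'⟩
                    rcases (hNGmem e').1 he' with (⟨heN, hznotin⟩ | rfl) | hbm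
                    · exact hfU e' ⟨heN, hve'⟩
                    · exfalso
                      rcases Sym2.mem_iff.1 hve' with h | h
                      · rw [h] at hvB
                        exact hvB huB
                      · exact hvx h
                    · exact absurd (hBMvert e' hbm v hve').1 hvB
            have hNGM := huniq NG hNGmo
            have hsx : s(u, x) ∈ M := by
              rw [← hNGM]
              exact (hNGmem _).2 (Or.inl (Or.inr rfl))
            have h3 : x = pa u := hpaU u (hBA huB) x hsx
            have h4 := hpaB u huB hunz
            rw [← h3] at h4
            exact hxnB h4.1
        -- ===== apply the induction hypothesis and lift the bridge =====
        have hA2subA : A2 ⊆ A := by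
          intro v hv
          rcases (hA2mem v).1 hv with h | h
          · exact h.1
          · rw [h]; exact hzA
        have hssub : A2 ⊂ A := by
          refine ⟨hA2subA, ?_⟩
          intro hAsub
          have h1 : a (i+1) ∈ A2 := hAsub (haA (i+1))
          rcases (hA2mem _).1 h1 with ⟨-, h⟩ | h
          · exact h ((hBmem _).2 ⟨i+1, ⟨by omega, by omega⟩, rfl⟩)
          · have := hinj (i+1) (by omega) i (by omega) h
            omega
        have hcard2 : A2.ncard ≤ k := by
          have h2 := Set.ncard_lt_ncard hssub (Set.toFinite A)
          omega
        obtain ⟨e2, he2M2, he2br⟩ := IH G2 A2 M2 hcard2 ⟨a i, hzA2⟩ hconf2 hmo2 huniq2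
        rcases (hM2mem e2).1 he2M2 with ⟨he2M, he2nB⟩ | rfl
        · -- the bridge is an M-edge away from the blossom
          obtain ⟨x0, y0, rfl⟩ : ∃ x y, e2 = s(x, y) := by
            induction e2 using Sym2.ind with
            | _ c d => exact ⟨c, d, rfl⟩
          have hx0 : x0 ∉ B := he2nB _ (Sym2.mem_mk_left _ _)
          have hy0 : y0 ∉ B := he2nB _ (Sym2.mem_mk_right _ _)
          refine ⟨s(x0, y0), he2M, ?_⟩
          rw [SimpleGraph.isBridge_iff]
          intro hreach
          rw [SimpleGraph.isBridge_iff] at he2br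
          apply he2br
          have hstep : ∀ c d, (G \ SimpleGraph.fromEdgeSet {s(x0, y0)}).Adj c d →
              p c = p d ∨ (G2 \ SimpleGraph.fromEdgeSet {s(x0, y0)}).Adj (p c) (p d) := by
            intro c d hcd
            rw [SimpleGraph.sdiff_adj, SimpleGraph.fromEdgeSet_adj] at hcd
            obtain ⟨hcd1, hcd2⟩ := hcd
            have hnecd : s(c, d) ≠ s(x0, y0) := fun h => hcd2 ⟨h, hcd1.ne⟩
            by_cases hcB : c ∈ B <;> by_cases hdB : d ∈ B
            · left
              rw [hpB c hcB, hpB d hdB]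
            · right
              rw [SimpleGraph.sdiff_adj, SimpleGraph.fromEdgeSet_adj, hpB c hcB, hpnB d hdB]
              refine ⟨(hG2 _ _).2 ⟨fun h => hdB (h ▸ hzB), Or.inr rfl, Or.inl hdB, c, d, hcd1,
                hpB c hcB, hpnB d hdB⟩, ?_⟩
              rintro ⟨hmem, -⟩
              rcases Sym2.eq_iff.1 hmem with ⟨h1, -⟩ | ⟨h1, -⟩
              · exact hx0 (h1 ▸ hzB)
              · exact hy0 (h1 ▸ hzB)
            · right
              rw [SimpleGraph.sdiff_adj, SimpleGraph.fromEdgeSet_adj, hpnB c hcB, hpB d hdB]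
              refine ⟨(hG2 _ _).2 ⟨fun h => hcB (h.symm ▸ hzB), Or.inl hcB, Or.inr rfl, c, d,
                hcd1, hpnB c hcB, hpB d hdB⟩, ?_⟩
              rintro ⟨hmem, -⟩
              rcases Sym2.eq_iff.1 hmem with ⟨-, h1⟩ | ⟨-, h1⟩
              · exact hy0 (h1 ▸ hzB)
              · exact hx0 (h1 ▸ hzB)
            · right
              rw [SimpleGraph.sdiff_adj, SimpleGraph.fromEdgeSet_adj, hpnB c hcB, hpnB d hdB]
              exact ⟨hG2away c d hcd1 hcB hdB, fun hh => hnecd hh.1⟩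
          have h2 := reach_lift p hstep hreach
          rwa [hpnB x0 hx0, hpnB y0 hy0] at h2
        · -- the bridge is the contracted matching edge itself
          refine ⟨s(a i, a (i-1)), hmzM, ?_⟩
          rw [SimpleGraph.isBridge_iff]
          intro hreach
          rw [SimpleGraph.isBridge_iff] at he2br
          apply he2br
          have hstep : ∀ c d, (G \ SimpleGraph.fromEdgeSet {s(a i, a (i-1))}).Adj c d →
              p c = p d ∨ (G2 \ SimpleGraph.fromEdgeSet {s(a i, a (i-1))}).Adj (p c) (p d) := by
            intro c d hcd
            rw [SimpleGraph.sdiff_adj, SimpleGraph.fromEdgeSet_adj] at hcd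
            obtain ⟨hcd1, hcd2⟩ := hcd
            have hnecd : s(c, d) ≠ s(a i, a (i-1)) := fun h => hcd2 ⟨h, hcd1.ne⟩
            by_cases hcB : c ∈ B <;> by_cases hdB : d ∈ B
            · left
              rw [hpB c hcB, hpB d hdB]
            · right
              rw [SimpleGraph.sdiff_adj, SimpleGraph.fromEdgeSet_adj, hpB c hcB, hpnB d hdB]
              refine ⟨(hG2 _ _).2 ⟨fun h => hdB (h ▸ hzB), Or.inr rfl, Or.inl hdB, c, d, hcd1,
                hpB c hcB, hpnB d hdB⟩, ?_⟩
              rintro ⟨hmem, -⟩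
              rcases Sym2.eq_iff.1 hmem with ⟨-, h1⟩ | ⟨h1, -⟩
              · obtain ⟨rc, ⟨hrc1, hrc2⟩, hrc3⟩ := (hBmem c).1 hcB
                rcases Nat.lt_or_ge i rc with h5 | h5
                · rw [← hrc3, h1] at hcd1
                  exact hb2 rc h5 hrc2 hcd1
                · have h6 : rc = i := by omega
                  apply hnecd
                  rw [← hrc3, h1, h6]
              · exact hzmz h1
            · right
              rw [SimpleGraph.sdiff_adj, SimpleGraph.fromEdgeSet_adj, hpnB c hcB, hpB d hdB]
              refine ⟨(hG2 _ _).2 ⟨fun h => hcB (h.symm ▸ hzB), Or.inl hcB, Or.inr rfl, c, d,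
                hcd1, hpnB c hcB, hpB d hdB⟩, ?_⟩
              rintro ⟨hmem, -⟩
              rcases Sym2.eq_iff.1 hmem with ⟨-, h1⟩ | ⟨h1, -⟩
              · exact hzmz h1
              · obtain ⟨rd, ⟨hrd1, hrd2⟩, hrd3⟩ := (hBmem d).1 hdB
                rcases Nat.lt_or_ge i rd with h5 | h5
                · rw [← hrd3, h1] at hcd1
                  exact hb2 rd h5 hrd2 hcd1.symm
                · have h6 : rd = i := by omega
                  apply hnecd
                  rw [← hrd3, h1, h6]
                  exact Sym2.eq_swap
            · right
              rw [SimpleGraph.sdiff_adj, SimpleGraph.fromEdgeSet_adj, hpnB c hcB, hpnB d hdB]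
              exact ⟨hG2away c d hcd1 hcB hdB, fun hh => hnecd hh.1⟩
          have h2 := reach_lift p hstep hreach
          rwa [hpB _ hzB, hpnB _ hmznB] at h2





      · -- i odd, j odd : alternating cycle
        exfalso
        apply seg_false hmo huniq a haA haM haE (i+1) (j - i) (by omega) (by omega) (by omega)
        · intro s hs t ht h
          rcases Nat.lt_or_ge (i+1+s) j with h1 | h1 <;> rcases Nat.lt_or_ge (i+1+t) j with h2 | h2
          · have := hinj _ h1 _ h2 h
            omega
          · have h3 : i+1+t = j := by omega
            rw [h3, ← haij] at h
            have := hinj _ h1 i (by omega) h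
            omega
          · have h3 : i+1+s = j := by omega
            rw [h3, ← haij] at h
            have := hinj i (by omega) _ h2 h
            omega
          · omega
        · have h1 : (i+1) + (j - i) - 1 = j := by omega
          rw [h1, ← haij]
          exact haE i hi

end Kotzig13

/-- If `G` has a unique perfect matching and no vertex of degree 1, then `G` is
not 2-edge-connected; in particular, `G` contains a bridge. -/
theorem stmt_13 {V : Type} [Fintype V] (G : SimpleGraph V) (M : Set (Sym2 V))
    (hcard : 2 ≤ Fintype.card V) (hM : IsPM G M)
    (huniq : ∀ N : Set (Sym2 V), IsPM G N → N = M)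
    (hdeg : ∀ v : V, (G.neighborSet v).ncard ≠ 1) :
    ¬ (G.Connected ∧ ∀ e : Sym2 V, ¬ G.IsBridge e) ∧ ∃ e : Sym2 V, G.IsBridge e := by
  have hne : (Set.univ : Set V).Nonempty := by
    have : 0 < Fintype.card V := by omega
    obtain ⟨v⟩ := Fintype.card_pos_iff.1 this
    exact ⟨v, trivial⟩
  have hmo : MatchingOn G Set.univ M := ⟨hM.1, fun _ _ _ _ => trivial, fun v _ => hM.2 v⟩
  have hu : ∀ N : Set (Sym2 V), MatchingOn G Set.univ N → N = M := by
    intro N hN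
    exact huniq N ⟨hN.1, fun v => hN.2.2 v trivial⟩
  obtain ⟨e, -, hbr⟩ := Kotzig13.kot (Set.univ : Set V).ncard G Set.univ M le_rfl hne
    (fun _ _ _ => trivial) hmo hu
  exact ⟨fun h => h.2 e hbr, e, hbr⟩
end

section
/- Let F be a cubic graph, S a set of three pairwise non-adjacent edges of F, and for i ≥ 0 define X_i as the edge cut between F_i' and F_i'' where F_0' = F[V(S)], F_0'' = F - F_0', and F_{i+1}'' is obtained from F_i'' by deleting a vertex of degree 1 together with its unique neighbor (with F_{i+1}' = F - F_{i+1}''). Then |X_0| ≤ 12 and |X_{i+1}| ≤ |X_i| for all i for which the construction is defined. -/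
/-- The edge boundary: edges of `F` with exactly one endpoint in `X`. -/
def edgeBoundary {V : Type} (F : SimpleGraph V) (X : Set V) : Set (Sym2 V) :=
  {e | e ∈ F.edgeSet ∧ ∃ a b : V, e = s(a, b) ∧ a ∈ X ∧ b ∉ X}

lemma nbr_diff_card {V : Type} [Fintype V] (F : SimpleGraph V) (v p : V)
    (hp : F.Adj v p) (hreg : (F.neighborSet v).ncard = 3) :
    (F.neighborSet v \ {p}).ncard = 2 := by
  rw [Set.ncard_diff_singleton_of_mem (show p ∈ F.neighborSet v from hp), hreg]

lemma star_bound {V : Type} [Fintype V] (F : SimpleGraph V) (A : Set V) (v p : V)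
    (hp : F.Adj v p) (hpA : p ∈ A) (hreg : (F.neighborSet v).ncard = 3) :
    ((fun w => s(v, w)) '' (F.neighborSet v \ A)).ncard ≤ 2 := by
  calc ((fun w => s(v, w)) '' (F.neighborSet v \ A)).ncard
      ≤ (F.neighborSet v \ A).ncard := Set.ncard_image_le (Set.toFinite _)
    _ ≤ (F.neighborSet v \ {p}).ncard := by
        refine Set.ncard_le_ncard (fun w hw => ⟨hw.1, ?_⟩) (Set.toFinite _)
        intro h; exact hw.2 (by simpa [Set.mem_singleton_iff.mp h] using hpA)
    _ = 2 := nbr_diff_card F v p hp hreg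

/-- For a cubic graph `F` and a set `S` of three pairwise non-adjacent edges, with
`F₀' = F[V(S)]` and `F_{i+1}''` obtained from `F_i''` by deleting a degree-1 vertex
together with its unique neighbour (so `A i` is the vertex set of `F_i'`), the edge
cuts `X_i` between `F_i'` and `F_i''` satisfy `|X₀| ≤ 12` and `|X_{i+1}| ≤ |X_i|`. -/
theorem stmt_14 {V : Type} [Fintype V] (F : SimpleGraph V)
    (hreg : ∀ v : V, (F.neighborSet v).ncard = 3)
    (e₁ e₂ e₃ : Sym2 V)
    (he : ({e₁, e₂, e₃} : Set (Sym2 V)) ⊆ F.edgeSet)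
    (hne : e₁ ≠ e₂ ∧ e₁ ≠ e₃ ∧ e₂ ≠ e₃)
    (hindep : ∀ v : V, ¬(v ∈ e₁ ∧ v ∈ e₂) ∧ ¬(v ∈ e₁ ∧ v ∈ e₃) ∧ ¬(v ∈ e₂ ∧ v ∈ e₃))
    (n : ℕ) (A : ℕ → Set V)
    (hA0 : A 0 = endPoints {e₁, e₂, e₃})
    (hstep : ∀ i < n, ∃ x y : V, x ∉ A i ∧ y ∉ A i ∧ F.Adj x y ∧
      (∀ z : V, z ∉ A i → F.Adj x z → z = y) ∧ A (i + 1) = A i ∪ {x, y}) :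
    (edgeBoundary F (A 0)).ncard ≤ 12 ∧
      ∀ i < n, (edgeBoundary F (A (i + 1))).ncard ≤ (edgeBoundary F (A i)).ncard := by
  constructor
  · -- Part 1
    clear hstep hne hindep
    induction e₁ using Sym2.ind with | _ a₁ b₁ =>
    induction e₂ using Sym2.ind with | _ a₂ b₂ =>
    induction e₃ using Sym2.ind with | _ a₃ b₃ =>
    have had₁ : F.Adj a₁ b₁ := F.mem_edgeSet.mp (he (Set.mem_insert _ _))
    have had₂ : F.Adj a₂ b₂ := F.mem_edgeSet.mp
      (he (Set.mem_insert_of_mem _ (Set.mem_insert _ _)))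
    have had₃ : F.Adj a₃ b₃ := F.mem_edgeSet.mp
      (he (Set.mem_insert_of_mem _ (Set.mem_insert_of_mem _ rfl)))
    have hA : A 0 = {a₁, b₁, a₂, b₂, a₃, b₃} := by
      rw [hA0]; ext v
      constructor
      · rintro ⟨e, he', hv⟩
        simp only [Set.mem_insert_iff, Set.mem_singleton_iff] at he'
        rcases he' with rfl | rfl | rfl <;> rw [Sym2.mem_iff] at hv <;>
          rcases hv with rfl | rfl <;> simp
      · intro hv
        simp only [Set.mem_insert_iff, Set.mem_singleton_iff] at hv
        rcases hv with rfl | rfl | rfl | rfl | rfl | rfl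
        exacts [⟨_, Or.inl rfl, Sym2.mem_mk_left _ _⟩, ⟨_, Or.inl rfl, Sym2.mem_mk_right _ _⟩,
          ⟨_, Or.inr (Or.inl rfl), Sym2.mem_mk_left _ _⟩,
          ⟨_, Or.inr (Or.inl rfl), Sym2.mem_mk_right _ _⟩,
          ⟨_, Or.inr (Or.inr rfl), Sym2.mem_mk_left _ _⟩,
          ⟨_, Or.inr (Or.inr rfl), Sym2.mem_mk_right _ _⟩]
    set g : V → Set (Sym2 V) := fun v => (fun w => s(v, w)) '' (F.neighborSet v \ A 0) with hg
    have hsub : edgeBoundary F (A 0) ⊆ g a₁ ∪ g b₁ ∪ g a₂ ∪ g b₂ ∪ g a₃ ∪ g b₃ := by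
      rintro e ⟨heE, a, b, rfl, ha, hb⟩
      have hab : F.Adj a b := F.mem_edgeSet.mp heE
      have hmem : s(a, b) ∈ g a := ⟨b, ⟨hab, hb⟩, rfl⟩
      rw [hA] at ha
      rcases ha with rfl | rfl | rfl | rfl | rfl | rfl
      exacts [Or.inl (Or.inl (Or.inl (Or.inl (Or.inl hmem)))),
        Or.inl (Or.inl (Or.inl (Or.inl (Or.inr hmem)))),
        Or.inl (Or.inl (Or.inl (Or.inr hmem))),
        Or.inl (Or.inl (Or.inr hmem)),
        Or.inl (Or.inr hmem), Or.inr hmem]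
    have hb1 : ∀ (v p : V), F.Adj v p → p ∈ A 0 → (g v).ncard ≤ 2 := fun v p h1 h2 =>
      star_bound F (A 0) v p h1 h2 (hreg v)
    have m1 : (g a₁).ncard ≤ 2 := hb1 a₁ b₁ had₁ (by rw [hA]; simp)
    have m2 : (g b₁).ncard ≤ 2 := hb1 b₁ a₁ had₁.symm (by rw [hA]; simp)
    have m3 : (g a₂).ncard ≤ 2 := hb1 a₂ b₂ had₂ (by rw [hA]; simp)
    have m4 : (g b₂).ncard ≤ 2 := hb1 b₂ a₂ had₂.symm (by rw [hA]; simp)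
    have m5 : (g a₃).ncard ≤ 2 := hb1 a₃ b₃ had₃ (by rw [hA]; simp)
    have m6 : (g b₃).ncard ≤ 2 := hb1 b₃ a₃ had₃.symm (by rw [hA]; simp)
    calc (edgeBoundary F (A 0)).ncard
        ≤ (g a₁ ∪ g b₁ ∪ g a₂ ∪ g b₂ ∪ g a₃ ∪ g b₃).ncard :=
          Set.ncard_le_ncard hsub (Set.toFinite _)
      _ ≤ (g a₁ ∪ g b₁ ∪ g a₂ ∪ g b₂ ∪ g a₃).ncard + (g b₃).ncard :=
          Set.ncard_union_le _ _
      _ ≤ ((g a₁ ∪ g b₁ ∪ g a₂ ∪ g b₂).ncard + (g a₃).ncard) + (g b₃).ncard := by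
          gcongr; exact Set.ncard_union_le _ _
      _ ≤ (((g a₁ ∪ g b₁ ∪ g a₂).ncard + (g b₂).ncard) + (g a₃).ncard) + (g b₃).ncard := by
          gcongr; exact Set.ncard_union_le _ _
      _ ≤ ((((g a₁ ∪ g b₁).ncard + (g a₂).ncard) + (g b₂).ncard) + (g a₃).ncard) + (g b₃).ncard := by
          gcongr; exact Set.ncard_union_le _ _
      _ ≤ (((((g a₁).ncard + (g b₁).ncard) + (g a₂).ncard) + (g b₂).ncard) + (g a₃).ncard)
            + (g b₃).ncard := by
          gcongr; exact Set.ncard_union_le _ _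
      _ ≤ 12 := by omega
  · -- Part 2
    intro i hi
    obtain ⟨x, y, hx, hy, hxy, hz, hA'⟩ := hstep i hi
    set B := edgeBoundary F (A (i + 1)) with hB
    set C := edgeBoundary F (A i) with hC
    set yedges : Set (Sym2 V) :=
      (fun b => s(y, b)) '' (F.neighborSet y \ (A i ∪ {x, y})) with hye
    set xedges : Set (Sym2 V) := (fun c => s(x, c)) '' (F.neighborSet x \ {y}) with hxe
    have hsubB : B ⊆ (B ∩ C) ∪ yedges := by
      rintro e heB
      obtain ⟨heE, a, b, rfl, ha, hb⟩ := heB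
      have heB' : s(a, b) ∈ B := ⟨heE, a, b, rfl, ha, hb⟩
      have hab : F.Adj a b := F.mem_edgeSet.mp heE
      rw [hA'] at ha hb
      rcases ha with ha | ha
      · exact Or.inl ⟨heB', heE, a, b, rfl, ha, fun h => hb (Or.inl h)⟩
      · rcases ha with rfl | rfl
        · exfalso
          have : b = y := hz b (fun h => hb (Or.inl h)) hab
          exact hb (Or.inr (by simp [this]))
        · exact Or.inr ⟨b, ⟨hab, hb⟩, rfl⟩
    have hyc : yedges.ncard ≤ 2 := by
      calc yedges.ncard ≤ (F.neighborSet y \ (A i ∪ {x, y})).ncard :=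
            Set.ncard_image_le (Set.toFinite _)
        _ ≤ (F.neighborSet y \ {x}).ncard := by
            refine Set.ncard_le_ncard (fun w hw => ⟨hw.1, fun h => ?_⟩) (Set.toFinite _)
            exact hw.2 (Or.inr (by simp [Set.mem_singleton_iff.mp h]))
        _ = 2 := nbr_diff_card F y x hxy.symm (hreg y)
    have hxc : xedges.ncard = 2 := by
      rw [hxe, Set.ncard_image_of_injective _ (fun c c' h => (Sym2.congr_right.mp h))]
      exact nbr_diff_card F x y hxy (hreg x)
    have hxsub : xedges ⊆ C \ B := by
      rintro e ⟨c, ⟨hcx, hcy⟩, rfl⟩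
      have hcx' : F.Adj x c := hcx
      have hcA : c ∈ A i := by
        by_contra hc
        exact hcy (hz c hc hcx')
      constructor
      · exact ⟨hcx', c, x, Sym2.eq_swap.symm, hcA, hx⟩
      · rintro ⟨-, a, b, heq, ha, hb⟩
        rw [Sym2.eq_iff] at heq
        rw [hA'] at hb
        rcases heq with ⟨rfl, rfl⟩ | ⟨rfl, rfl⟩
        · exact hb (Or.inl hcA)
        · exact hb (Or.inr (Or.inl rfl))
    have key : 2 ≤ (C \ B).ncard := hxc ▸ Set.ncard_le_ncard hxsub (Set.toFinite _)
    calc B.ncard ≤ ((B ∩ C) ∪ yedges).ncard := Set.ncard_le_ncard hsubB (Set.toFinite _)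
      _ ≤ (B ∩ C).ncard + yedges.ncard := Set.ncard_union_le _ _
      _ ≤ (C ∩ B).ncard + (C \ B).ncard := by rw [Set.inter_comm]; omega
      _ = C.ncard := Set.ncard_inter_add_ncard_diff_eq_ncard C B (Set.toFinite _)
end

section
/- Let G be a connected graph with a unique perfect matching M, and let e = uv be a bridge of G with e ∈ M separating G into components H1 (containing u) and H2 (containing v). Then H1 - u and H2 - v each have a unique perfect matching (possibly empty), and conversely M is determined by e together with these matchings. -/
lemma pm_of_parts {V : Type} (G : SimpleGraph V) (u v : V) (A B : Set V)
    (huv : G.Adj u v)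
    (hcover : ∀ w : V, w = u ∨ w = v ∨ w ∈ A ∨ w ∈ B)
    (huA : u ∉ A) (huB : u ∉ B) (hvA : v ∉ A) (hvB : v ∉ B)
    (hAB : ∀ w, w ∈ A → w ∈ B → False)
    (N₁ N₂ : Set (Sym2 V)) (h1 : MatchingOn G A N₁) (h2 : MatchingOn G B N₂) :
    IsPM G ({s(u,v)} ∪ N₁ ∪ N₂) := by
  obtain ⟨h1e, h1v, h1m⟩ := h1
  obtain ⟨h2e, h2v, h2m⟩ := h2
  constructor
  · rintro e ((rfl | he) | he)
    · exact huv
    · exact h1e he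
    · exact h2e he
  intro w
  rcases hcover w with rfl | rfl | hw | hw
  · refine ⟨s(w,v), ⟨Or.inl (Or.inl rfl), by simp⟩, ?_⟩
    rintro e ⟨(rfl | he) | he, hwe⟩
    · rfl
    · exact absurd (h1v e he w hwe) huA
    · exact absurd (h2v e he w hwe) huB
  · refine ⟨s(u,w), ⟨Or.inl (Or.inl rfl), by simp⟩, ?_⟩
    rintro e ⟨(rfl | he) | he, hwe⟩
    · rfl
    · exact absurd (h1v e he w hwe) hvA
    · exact absurd (h2v e he w hwe) hvB
  · obtain ⟨e, ⟨he, hwe⟩, hu⟩ := h1m w hw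
    refine ⟨e, ⟨Or.inl (Or.inr he), hwe⟩, ?_⟩
    rintro f ⟨(rfl | hf) | hf, hwf⟩
    · rcases Sym2.mem_iff.1 hwf with rfl | rfl
      · exact absurd hw huA
      · exact absurd hw hvA
    · exact hu f ⟨hf, hwf⟩
    · exact absurd (h2v f hf w hwf) (fun h => hAB w hw h)
  · obtain ⟨e, ⟨he, hwe⟩, hu⟩ := h2m w hw
    refine ⟨e, ⟨Or.inr he, hwe⟩, ?_⟩
    rintro f ⟨(rfl | hf) | hf, hwf⟩
    · rcases Sym2.mem_iff.1 hwf with rfl | rfl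
      · exact absurd hw huB
      · exact absurd hw hvB
    · exact absurd (h1v f hf w hwf) (fun h => hAB w h hw)
    · exact hu f ⟨hf, hwf⟩


/-- Let `G` be connected with unique perfect matching `M` and let `e = uv ∈ M` be a
bridge separating `G` into components `H₁ ∋ u` and `H₂ ∋ v`. Then `H₁ - u` and
`H₂ - v` each have a unique (possibly empty) perfect matching, and `M` is determined
by `e` together with these matchings. -/
theorem stmt_18 {V : Type} [Fintype V] (G : SimpleGraph V) (hconn : G.Connected)
    (M : Set (Sym2 V)) (hM : IsPM G M)
    (huniq : ∀ N : Set (Sym2 V), IsPM G N → N = M)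
    (u v : V) (heM : s(u, v) ∈ M) (hbridge : G.IsBridge s(u, v)) :
    let H₁ : Set V := {w | (G.deleteEdges {s(u, v)}).Reachable u w}
    let H₂ : Set V := {w | (G.deleteEdges {s(u, v)}).Reachable v w}
    ∃ M₁ M₂ : Set (Sym2 V),
      MatchingOn G (H₁ \ {u}) M₁ ∧ (∀ N, MatchingOn G (H₁ \ {u}) N → N = M₁) ∧
      MatchingOn G (H₂ \ {v}) M₂ ∧ (∀ N, MatchingOn G (H₂ \ {v}) N → N = M₂) ∧
      M = {s(u, v)} ∪ M₁ ∪ M₂ := by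
  intro H₁ H₂
  obtain ⟨hMe, hMm⟩ := hM
  have huv : G.Adj u v := hMe heM
  have hnr : ¬ (G.deleteEdges {s(u,v)}).Reachable u v :=
    SimpleGraph.isBridge_iff.1 hbridge
  -- every vertex is in H₁ or H₂
  have hcover : ∀ w : V, w ∈ H₁ ∨ w ∈ H₂ := by
    have key : ∀ (a w : V), G.Walk a w → (a ∈ H₁ ∨ a ∈ H₂) → (w ∈ H₁ ∨ w ∈ H₂) := by
      intro a w p
      induction p with
      | nil => exact id
      | @cons a b w hab p ih =>
        intro ha
        apply ih
        by_cases hba : s(a,b) = s(u,v)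
        · rcases Sym2.eq_iff.1 hba with ⟨rfl, rfl⟩ | ⟨rfl, rfl⟩
          · exact Or.inr (SimpleGraph.Reachable.refl _)
          · exact Or.inl (SimpleGraph.Reachable.refl _)
        · have hadj : (G.deleteEdges {s(u,v)}).Adj a b := by
            rw [SimpleGraph.deleteEdges_adj]
            exact ⟨hab, by simpa using hba⟩
          rcases ha with h | h
          · exact Or.inl (h.trans hadj.reachable)
          · exact Or.inr (h.trans hadj.reachable)
    intro w
    exact key u w (hconn.preconnected u w).some (Or.inl (SimpleGraph.Reachable.refl _))
  have hdisj : ∀ w, w ∈ H₁ → w ∈ H₂ → False := fun w h1 h2 => hnr (h1.trans h2.symm)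
  have huH₁ : u ∈ H₁ := SimpleGraph.Reachable.refl _
  have hvH₂ : v ∈ H₂ := SimpleGraph.Reachable.refl _
  have hvH₁ : v ∉ H₁ := fun h => hdisj v h hvH₂
  have huH₂ : u ∉ H₂ := fun h => hdisj u huH₁ h
  have hune : u ≠ v := huv.ne
  -- unique edge at u and at v
  have hu_e : ∀ e ∈ M, u ∈ e → e = s(u,v) := by
    intro e he hue
    obtain ⟨f, -, hf⟩ := hMm u
    exact (hf e ⟨he, hue⟩).trans (hf s(u,v) ⟨heM, by simp⟩).symm
  have hv_e : ∀ e ∈ M, v ∈ e → e = s(u,v) := by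
    intro e he hve
    obtain ⟨f, -, hf⟩ := hMm v
    exact (hf e ⟨he, hve⟩).trans (hf s(u,v) ⟨heM, by simp⟩).symm
  set A : Set V := H₁ \ {u} with hA
  set B : Set V := H₂ \ {v} with hB
  set M₁ : Set (Sym2 V) := {e | e ∈ M ∧ ∀ x ∈ e, x ∈ A} with hM₁def
  set M₂ : Set (Sym2 V) := {e | e ∈ M ∧ ∀ x ∈ e, x ∈ B} with hM₂def
  have hclassify : ∀ e, e ∈ M → e = s(u,v) ∨ e ∈ M₁ ∨ e ∈ M₂ := by
    intro e
    induction e using Sym2.ind with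
    | _ a b =>
      intro he
      by_cases hes : s(a,b) = s(u,v)
      · exact Or.inl hes
      right
      have hau : a ≠ u := fun h => hes (hu_e _ he (by simp [h]))
      have hav : a ≠ v := fun h => hes (hv_e _ he (by simp [h]))
      have hbu : b ≠ u := fun h => hes (hu_e _ he (by simp [h]))
      have hbv : b ≠ v := fun h => hes (hv_e _ he (by simp [h]))
      have hadj : (G.deleteEdges {s(u,v)}).Adj a b := by
        rw [SimpleGraph.deleteEdges_adj]
        exact ⟨hMe he, by simpa using hes⟩
      rcases hcover a with h | h
      · left
        refine ⟨he, ?_⟩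
        intro x hx
        rcases Sym2.mem_iff.1 hx with rfl | rfl
        · exact ⟨h, hau⟩
        · exact ⟨h.trans hadj.reachable, hbu⟩
      · right
        refine ⟨he, ?_⟩
        intro x hx
        rcases Sym2.mem_iff.1 hx with rfl | rfl
        · exact ⟨h, hav⟩
        · exact ⟨h.trans hadj.reachable, hbv⟩
  have hMon₁ : MatchingOn G A M₁ := by
    refine ⟨fun e he => hMe he.1, fun e he => he.2, ?_⟩
    intro w hw
    obtain ⟨e, ⟨he, hwe⟩, hun⟩ := hMm w
    have heM₁ : e ∈ M₁ := by
      rcases hclassify e he with rfl | h | h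
      · rcases Sym2.mem_iff.1 hwe with rfl | rfl
        · exact absurd rfl hw.2
        · exact absurd hw.1 hvH₁
      · exact h
      · exact absurd (h.2 w hwe).1 (fun hh => hdisj w hw.1 hh)
    exact ⟨e, ⟨heM₁, hwe⟩, fun f hf => hun f ⟨hf.1.1, hf.2⟩⟩
  have hMon₂ : MatchingOn G B M₂ := by
    refine ⟨fun e he => hMe he.1, fun e he => he.2, ?_⟩
    intro w hw
    obtain ⟨e, ⟨he, hwe⟩, hun⟩ := hMm w
    have heM₂ : e ∈ M₂ := by
      rcases hclassify e he with rfl | h | h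
      · rcases Sym2.mem_iff.1 hwe with rfl | rfl
        · exact absurd hw.1 huH₂
        · exact absurd rfl hw.2
      · exact absurd (h.2 w hwe).1 (fun hh => hdisj w hh hw.1)
      · exact h
    exact ⟨e, ⟨heM₂, hwe⟩, fun f hf => hun f ⟨hf.1.1, hf.2⟩⟩
  have huA : u ∉ A := fun h => h.2 rfl
  have huB : u ∉ B := fun h => huH₂ h.1
  have hvA : v ∉ A := fun h => hvH₁ h.1
  have hvB : v ∉ B := fun h => h.2 rfl
  have hAB : ∀ w, w ∈ A → w ∈ B → False := fun w h1 h2 => hdisj w h1.1 h2.1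
  have hcover' : ∀ w : V, w = u ∨ w = v ∨ w ∈ A ∨ w ∈ B := by
    intro w
    by_cases h1 : w = u
    · exact Or.inl h1
    by_cases h2 : w = v
    · exact Or.inr (Or.inl h2)
    rcases hcover w with h | h
    · exact Or.inr (Or.inr (Or.inl ⟨h, h1⟩))
    · exact Or.inr (Or.inr (Or.inr ⟨h, h2⟩))
  refine ⟨M₁, M₂, hMon₁, ?_, hMon₂, ?_, ?_⟩
  · -- uniqueness of M₁
    intro N hN
    have hpm : IsPM G ({s(u,v)} ∪ N ∪ M₂) :=
      pm_of_parts G u v A B huv hcover' huA huB hvA hvB hAB N M₂ hN hMon₂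
    have heq := huniq _ hpm
    ext e
    constructor
    · intro he
      have heM' : e ∈ M := heq ▸ Or.inl (Or.inr he)
      exact ⟨heM', fun x hx => hN.2.1 e he x hx⟩
    · intro he
      have heU : e ∈ ({s(u,v)} ∪ N ∪ M₂ : Set (Sym2 V)) := heq.symm ▸ he.1
      rcases heU with (rfl | h) | h
      · exact absurd rfl (he.2 u (by simp)).2
      · exact h
      · exact absurd (h.2 e.out.1 (Sym2.out_fst_mem e)).1
          (fun hh => hdisj _ (he.2 e.out.1 (Sym2.out_fst_mem e)).1 hh)
  · -- uniqueness of M₂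
    intro N hN
    have hcover'' : ∀ w : V, w = v ∨ w = u ∨ w ∈ B ∨ w ∈ A := by
      intro w
      rcases hcover' w with h | h | h | h
      · exact Or.inr (Or.inl h)
      · exact Or.inl h
      · exact Or.inr (Or.inr (Or.inr h))
      · exact Or.inr (Or.inr (Or.inl h))
    have hpm : IsPM G ({s(v,u)} ∪ N ∪ M₁) :=
      pm_of_parts G v u B A huv.symm hcover'' hvB hvA huB huA
        (fun w h1 h2 => hAB w h2 h1) N M₁ hN hMon₁
    have heq := huniq _ hpm
    ext e
    constructor
    · intro he
      have heM' : e ∈ M := heq ▸ Or.inl (Or.inr he)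
      exact ⟨heM', fun x hx => hN.2.1 e he x hx⟩
    · intro he
      have heU : e ∈ ({s(v,u)} ∪ N ∪ M₁ : Set (Sym2 V)) := heq.symm ▸ he.1
      rcases heU with (rfl | h) | h
      · exact absurd rfl (he.2 v (by simp)).2
      · exact h
      · exact absurd (h.2 e.out.1 (Sym2.out_fst_mem e)).1
          (fun hh => hdisj _ hh (he.2 e.out.1 (Sym2.out_fst_mem e)).1)
  · -- M = {s(u,v)} ∪ M₁ ∪ M₂
    ext e
    constructor
    · intro he
      rcases hclassify e he with h | h | h
      · exact Or.inl (Or.inl h)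
      · exact Or.inl (Or.inr h)
      · exact Or.inr h
    · rintro ((rfl | he) | he)
      · exact heM
      · exact he.1
      · exact he.1
end
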